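/- arXiv:math/9806004 — 5 statements merged into one kernel-verified Lean document; each statement's English description precedes it below -/
import Mathlib

section
/- Claim (1) of the tensor-trace lemma: Let O : V^{⊗N} → V^{⊗N} be a linear operator and let σ be a cyclic permutation of {1,…,N} such that O(U_j) ⊆ U_{σ(j)} for every j, 1 ≤ j ≤ N. Then the intersection T = ⋂_{j=1}^N U_j (the canonical copy of W^{⊗N} inside V^{⊗N}) and the sum S = Σ_{j=1}^N U_j are both invariant under O, and trace(O restricted to T) = trace(O on V^{⊗N}) − trace(the operator induced by O on the quotient V^{⊗N}/S) (this quotient is canonically isomorphic to (V/W)^{⊗N}). -/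
open scoped TensorProduct


/-- Trace of the restriction of `O` to an invariant subspace spanned by a subset of a basis
is the sum of the corresponding diagonal matrix entries. -/
theorem aux_trace_restrict_span {K M : Type*} [Field K] [AddCommGroup M] [Module K M]
    {η : Type*} [Fintype η] [DecidableEq η]
    (B : Module.Basis η K M) (Q : Set η) [DecidablePred (· ∈ Q)]
    (O : M →ₗ[K] M) (p : Submodule K M) (hp : p = Submodule.span K (B '' Q))
    (h : ∀ x ∈ p, O x ∈ p) :
    LinearMap.trace K p (O.restrict h) =
      ∑ g ∈ Finset.univ.filter (· ∈ Q), LinearMap.toMatrix B B O g g := by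
  haveI : Module.Finite K M := Module.Finite.of_basis B
  subst hp
  set Pr : M →ₗ[K] M := B.constr K (fun i => if i ∈ Q then B i else 0) with hPrdef
  have hPrB : ∀ i, Pr (B i) = if i ∈ Q then B i else 0 := fun i => B.constr_basis _ _ _
  have key : ∀ x : M, Pr x = ∑ i ∈ Finset.univ.filter (· ∈ Q), B.repr x i • B i := by
    intro x
    conv_lhs => rw [← B.sum_repr x]
    rw [map_sum, Finset.sum_filter]
    refine Finset.sum_congr rfl fun i _ => ?_
    rw [map_smul, hPrB]
    split <;> simp
  have hid : ∀ x ∈ Submodule.span K (B '' Q), Pr x = x := by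
    intro x hx
    induction hx using Submodule.span_induction with
    | mem x hx => obtain ⟨i, hi, rfl⟩ := hx; rw [hPrB, if_pos hi]
    | zero => simp
    | add x y _ _ hx hy => simp [map_add, hx, hy]
    | smul c x _ hx => simp [map_smul, hx]
  have hmem : ∀ x : M, Pr x ∈ Submodule.span K (B '' Q) := by
    intro x; rw [key]
    exact Submodule.sum_mem _ fun i hi =>
      Submodule.smul_mem _ _ (Submodule.subset_span ⟨i, (Finset.mem_filter.mp hi).2, rfl⟩)
  have hres : O.restrict h = (Pr ∘ₗ O).restrict (fun x _ => hmem (O x)) := by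
    apply LinearMap.ext; intro x
    apply Subtype.ext
    rw [LinearMap.restrict_coe_apply, LinearMap.restrict_coe_apply, LinearMap.comp_apply]
    exact (hid _ (h x x.2)).symm
  rw [hres, LinearMap.trace_restrict_eq_of_forall_mem _ _ (fun x => hmem (O x)),
      LinearMap.trace_eq_matrix_trace K B, Matrix.trace]
  rw [Finset.sum_filter]
  refine Finset.sum_congr rfl fun g _ => ?_
  have : (Pr ∘ₗ O) (B g) = ∑ i ∈ Finset.univ.filter (· ∈ Q), B.repr (O (B g)) i • B i := by
    rw [LinearMap.comp_apply, key]
  rw [Matrix.diag_apply, LinearMap.toMatrix_apply, this, map_sum, Finsupp.finset_sum_apply]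
  have : ∀ i ∈ Finset.univ.filter (· ∈ Q),
      (B.repr (B.repr (O (B g)) i • B i)) g = if i = g then B.repr (O (B g)) i else 0 := by
    intro i _
    rw [map_smul, Finsupp.smul_apply, B.repr_self_apply]
    split <;> simp
  rw [Finset.sum_congr rfl this, Finset.sum_ite_eq' (Finset.univ.filter (· ∈ Q)) g]
  simp [LinearMap.toMatrix_apply]

/-- Additivity of trace over an invariant subspace. -/
theorem aux_trace_add {K M : Type*} [Field K] [AddCommGroup M] [Module K M]
    [FiniteDimensional K M] (p : Submodule K M) (O : M →ₗ[K] M)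
    (h : p ≤ p.comap O) (h' : ∀ x ∈ p, O x ∈ p) :
    LinearMap.trace K M O =
      LinearMap.trace K p (O.restrict h') +
        LinearMap.trace K (M ⧸ p) (Submodule.mapQ p p O h) := by
  obtain ⟨q, hq⟩ := Submodule.exists_isCompl p
  set π : M →ₗ[K] p := Submodule.projectionOnto p q hq with hπdef
  set P : M →ₗ[K] M := p.subtype ∘ₗ π with hPdef
  have hPmem : ∀ x, P x ∈ p := fun x => (π x).2
  have hPid : ∀ x ∈ p, P x = x := by
    intro x hx
    have : π x = ⟨x, hx⟩ := Submodule.projectionOnto_apply_left hq ⟨x, hx⟩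
    simp [hPdef, this]
  have hdecomp : ∀ x : M, x - P x ∈ q := by
    intro x
    have hx : x ∈ p ⊔ q := by rw [hq.sup_eq_top]; trivial
    obtain ⟨a, ha, b, hb, rfl⟩ := Submodule.mem_sup.mp hx
    have : P (a + b) = a := by
      have h1 : π a = ⟨a, ha⟩ := Submodule.projectionOnto_apply_left hq ⟨a, ha⟩
      have h2 : π b = 0 := Submodule.projectionOnto_apply_right hq ⟨b, hb⟩
      simp [hPdef, map_add, h1, h2]
    rw [this]; simpa using hb
  have hsplit : O = P ∘ₗ O + (O - P ∘ₗ O) := (add_sub_cancel _ _).symm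
  conv_lhs => rw [hsplit]
  rw [map_add]
  congr 1
  · rw [← LinearMap.trace_restrict_eq_of_forall_mem p (P ∘ₗ O) (fun x => hPmem (O x))
      (fun x _ => hPmem (O x))]
    congr 1
    apply LinearMap.ext; intro x
    apply Subtype.ext
    rw [LinearMap.restrict_coe_apply, LinearMap.restrict_coe_apply, LinearMap.comp_apply]
    exact hPid _ (h' x x.2)
  · have hmemq : ∀ x, (O - P ∘ₗ O) x ∈ q := by
      intro x
      simpa using hdecomp (O x)
    rw [← LinearMap.trace_restrict_eq_of_forall_mem q _ hmemq (fun x _ => hmemq x)]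
    rw [← LinearMap.trace_conj' (Submodule.mapQ p p O h)
      (Submodule.quotientEquivOfIsCompl p q hq)]
    congr 1
    apply LinearMap.ext; intro y
    apply Subtype.ext
    rw [LinearMap.restrict_coe_apply]
    have e := Submodule.quotientEquivOfIsCompl p q hq
    rw [LinearEquiv.conj_apply, LinearMap.comp_apply, LinearMap.comp_apply]
    have h1 : (Submodule.quotientEquivOfIsCompl p q hq).symm.toLinearMap y
        = Submodule.Quotient.mk (y : M) := by
      simp [Submodule.quotientEquivOfIsCompl_symm_apply]
    rw [h1, Submodule.mapQ_apply]
    have h2 : (Submodule.Quotient.mk (O (y : M)) : M ⧸ p)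
        = Submodule.Quotient.mk ((⟨O (y : M) - P (O (y : M)), hdecomp _⟩ : q) : M) := by
      rw [Submodule.Quotient.eq]
      simpa using hPmem (O (y : M))
    rw [LinearEquiv.coe_coe, h2, Submodule.quotientEquivOfIsCompl_apply_mk_coe]
    simp


theorem aux_tprod_expand {K V : Type*} [Field K] [AddCommGroup V] [Module K V]
    {ι : Type*} [Fintype ι] [DecidableEq ι] (b : Module.Basis ι K V) {N : ℕ}
    (f : Fin N → V) :
    PiTensorProduct.tprod K f =
      ∑ r : Fin N → ι, (∏ i, b.repr (f i) (r i)) •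
        PiTensorProduct.tprod K (fun i => b (r i)) := by
  have h1 : f = fun i => ∑ k, b.repr (f i) k • b k := by
    funext i; exact (b.sum_repr (f i)).symm
  conv_lhs => rw [h1]
  rw [MultilinearMap.map_sum]
  refine Finset.sum_congr rfl fun r _ => ?_
  rw [MultilinearMap.map_smul_univ]

theorem aux_tensor_basis {K V : Type*} [Field K] [AddCommGroup V] [Module K V]
    {ι : Type*} [Fintype ι] [DecidableEq ι] (b : Module.Basis ι K V) (N : ℕ) :
    ∃ B : Module.Basis (Fin N → ι) K (⨂[K] _ : Fin N, V),
      ∀ g, B g = PiTensorProduct.tprod K (fun j => b (g j)) := by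
  have hli : LinearIndependent K
      (fun g : Fin N → ι => PiTensorProduct.tprod K (fun j => b (g j))) := by
    rw [Fintype.linearIndependent_iff]
    intro c hc h₀
    set L : (⨂[K] _ : Fin N, V) →ₗ[K] K :=
      PiTensorProduct.lift ((MultilinearMap.mkPiAlgebra K (Fin N) K).compLinearMap
        (fun j => b.coord (h₀ j))) with hLdef
    have hL : ∀ g : Fin N → ι, L (PiTensorProduct.tprod K (fun j => b (g j)))
        = if g = h₀ then 1 else 0 := by
      intro g
      rw [hLdef, PiTensorProduct.lift.tprod]
      rw [MultilinearMap.compLinearMap_apply, MultilinearMap.mkPiAlgebra_apply]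
      have : ∀ j : Fin N, b.coord (h₀ j) (b (g j)) = if g j = h₀ j then 1 else 0 := by
        intro j; rw [Module.Basis.coord_apply, Module.Basis.repr_self_apply]
      rw [Finset.prod_congr rfl fun j _ => this j]
      by_cases hg : g = h₀
      · subst hg; simp
      · rw [if_neg hg]
        obtain ⟨j, hj⟩ := Function.ne_iff.mp hg
        exact Finset.prod_eq_zero (Finset.mem_univ j) (if_neg hj)
    have h2 := congrArg L hc
    rw [map_sum, map_zero] at h2
    simp_rw [map_smul, hL, smul_eq_mul, mul_ite, mul_one, mul_zero] at h2
    rw [Finset.sum_ite_eq' Finset.univ h₀] at h2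
    simpa using h2
  have hsp : ⊤ ≤ Submodule.span K
      (Set.range fun g : Fin N → ι => PiTensorProduct.tprod K (fun j => b (g j))) := by
    rw [← PiTensorProduct.span_tprod_eq_top]
    apply Submodule.span_le.mpr
    rintro x ⟨f, rfl⟩
    rw [aux_tprod_expand b f]
    exact Submodule.sum_mem _ fun r _ =>
      Submodule.smul_mem _ _ (Submodule.subset_span ⟨r, rfl⟩)
  exact ⟨Module.Basis.mk hli hsp, fun g => Module.Basis.mk_apply hli hsp g⟩

/-- **Claim (1) of the tensor-trace lemma.**
Let `K` be a field, `V` a finite-dimensional `K`-vector space, `W ⊆ V` a subspace and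
`N ≥ 1`.  Inside the `N`-th tensor power of `V`, let `U j` be the subspace spanned by
elementary tensors whose `j`-th factor lies in `W`.  Suppose `O` is a linear operator on
the tensor power and `σ` is a cyclic permutation of `{1,…,N}` (the cyclic group it
generates acts transitively) such that `O (U j) ⊆ U (σ j)` for all `j`.  Then the
intersection `T = ⋂ j, U j` (the canonical copy of `W^⊗N`) and the sum `S = Σ j, U j`
are invariant under `O`, and `trace (O|_T) = trace O − trace (O on the quotient by S)`
(the quotient being canonically `(V/W)^⊗N`). -/
theorem tensor_trace_lemma_claim1 {K : Type*} [Field K]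
    {V : Type*} [AddCommGroup V] [Module K V] [FiniteDimensional K V]
    (W : Submodule K V) (N : ℕ) (hN : 1 ≤ N)
    (O : (⨂[K] _ : Fin N, V) →ₗ[K] (⨂[K] _ : Fin N, V))
    (σ : Equiv.Perm (Fin N)) (hσ : ∀ i j : Fin N, ∃ m : ℕ, (σ ^ m) i = j)
    (U : Fin N → Submodule K (⨂[K] _ : Fin N, V))
    (hU : ∀ j, U j = Submodule.span K
      {x | ∃ f : Fin N → V, f j ∈ W ∧ x = PiTensorProduct.tprod K f})
    (hO : ∀ j, (U j).map O ≤ U (σ j)) :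
    (∀ x ∈ ⨅ j, U j, O x ∈ ⨅ j, U j) ∧
    ((⨆ j, U j) ≤ (⨆ j, U j).comap O) ∧
    ∀ (hT : ∀ x ∈ ⨅ j, U j, O x ∈ ⨅ j, U j)
      (hS : (⨆ j, U j) ≤ (⨆ j, U j).comap O),
      LinearMap.trace K _ (O.restrict hT) =
        LinearMap.trace K _ O -
          LinearMap.trace K _ (Submodule.mapQ (⨆ j, U j) (⨆ j, U j) O hS) := by
  classical
  -- Part 1: the intersection is invariant.
  have part1 : ∀ x ∈ ⨅ j, U j, O x ∈ ⨅ j, U j := by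
    intro x hx
    rw [Submodule.mem_iInf] at hx ⊢
    intro j
    have h1 : x ∈ U (σ⁻¹ j) := hx _
    have h2 := hO (σ⁻¹ j) (Submodule.mem_map_of_mem h1)
    rwa [← Equiv.Perm.mul_apply, mul_inv_cancel, Equiv.Perm.one_apply] at h2
  -- Part 2: the sum is invariant.
  have part2 : (⨆ j, U j) ≤ (⨆ j, U j).comap O := by
    apply iSup_le
    intro j x hx
    exact Submodule.mem_comap.mpr (le_iSup U (σ j) (hO j ⟨x, hx, rfl⟩))
  refine ⟨part1, part2, ?_⟩
  intro hT hS
  -- adapted basis of V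
  obtain ⟨s, hsW, hspan, hli0⟩ := exists_linearIndependent K (W : Set V)
  have hli : LinearIndepOn K id s := hli0
  set b : Module.Basis _ K V := Module.Basis.extend hli with hbdef
  haveI : Fintype ↥(hli.extend (Set.subset_univ s)) := FiniteDimensional.fintypeBasisIndex b
  set sW : Set ↥(hli.extend (Set.subset_univ s)) := {i | b i ∈ W} with hsWdef
  have hball : ∀ i : ↥(hli.extend (Set.subset_univ s)), b i = (i : V) := fun i => by rw [hbdef]; exact Module.Basis.extend_apply_self hli i
  -- W is the span of the basis vectors indexed by sW
  have hWspan : W = Submodule.span K (b '' sW) := by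
    apply le_antisymm
    · rw [← Submodule.span_eq W, ← hspan]
      apply Submodule.span_mono
      intro x hx
      have hxext : x ∈ hli.extend (Set.subset_univ s) := hli.subset_extend _ hx
      have hxW : x ∈ W := hsW hx
      refine ⟨⟨x, hxext⟩, ?_, hball ⟨x, hxext⟩⟩
      show b ⟨x, hxext⟩ ∈ W
      rw [hball]; exact hxW
    · rw [Submodule.span_le]
      rintro x ⟨i, hi, rfl⟩
      exact hi
  -- basis of the tensor power
  obtain ⟨B, hB⟩ := aux_tensor_basis b N
  haveI : Module.Finite K (⨂[K] _ : Fin N, V) := Module.Finite.of_basis B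
  -- description of U j
  have hUj : ∀ j, U j = Submodule.span K (B '' {g : Fin N → ↥(hli.extend (Set.subset_univ s)) | g j ∈ sW}) := by
    intro j
    rw [hU j]
    apply le_antisymm
    · rw [Submodule.span_le]
      rintro x ⟨f, hfW, rfl⟩
      rw [SetLike.mem_coe, aux_tprod_expand b f]
      apply Submodule.sum_mem
      intro r _
      by_cases hr : r j ∈ sW
      · refine Submodule.smul_mem _ _ (Submodule.subset_span ⟨r, hr, ?_⟩)
        rw [hB]
      · have hfj : f j ∈ Submodule.span K (b '' sW) := hWspan ▸ hfW
        have hsupp := (Module.Basis.mem_span_image b).mp hfj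
        have hz : b.repr (f j) (r j) = 0 := by
          by_contra hc
          exact hr (hsupp (Finsupp.mem_support_iff.mpr hc))
        rw [Finset.prod_eq_zero (Finset.mem_univ j) hz, zero_smul]
        exact Submodule.zero_mem _
    · rw [Submodule.span_le]
      rintro x ⟨g, hg, rfl⟩
      refine Submodule.subset_span ⟨fun j' => b (g j'), hg, ?_⟩
      rw [hB]
  -- description of the sum
  set Qs : Set (Fin N → ↥(hli.extend (Set.subset_univ s))) := {g | ∃ j, g j ∈ sW} with hQsdef
  have hSspan : (⨆ j, U j) = Submodule.span K (B '' Qs) := by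
    simp_rw [hUj]
    rw [← Submodule.span_iUnion]
    rw [← Set.image_iUnion]
    congr 2
    ext g
    simp [hQsdef, Set.mem_iUnion]
  -- description of the intersection
  set Qt : Set (Fin N → ↥(hli.extend (Set.subset_univ s))) := {g | ∀ j, g j ∈ sW} with hQtdef
  have hTspan : (⨅ j, U j) = Submodule.span K (B '' Qt) := by
    ext x
    simp only [Submodule.mem_iInf, hUj, Module.Basis.mem_span_image]
    constructor
    · intro h g hg j
      exact h j hg
    · intro h j g hg
      exact h hg j
  -- diagonal entries vanish off Qt within Qs
  have keydiag : ∀ g : Fin N → ↥(hli.extend (Set.subset_univ s)), g ∈ Qs → g ∉ Qt →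
      LinearMap.toMatrix B B O g g = 0 := by
    intro g hgs hgt
    obtain ⟨j₀, hj₀⟩ := hgs
    have hex : ∃ j, g j ∈ sW ∧ g (σ j) ∉ sW := by
      by_contra hc
      push_neg at hc
      apply hgt
      intro j
      obtain ⟨m, hm⟩ := hσ j₀ j
      rw [← hm]
      clear hm
      induction m with
      | zero => simpa using hj₀
      | succ m ih =>
        rw [pow_succ', Equiv.Perm.mul_apply]
        exact hc _ ih
    obtain ⟨j, hj, hjσ⟩ := hex
    have hBg : B g ∈ U j := by
      rw [hUj]
      exact Submodule.subset_span ⟨g, hj, rfl⟩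
    have hOBg : O (B g) ∈ U (σ j) := hO j ⟨B g, hBg, rfl⟩
    rw [hUj] at hOBg
    have hsupp := (Module.Basis.mem_span_image B).mp hOBg
    rw [LinearMap.toMatrix_apply]
    by_contra hc
    exact hjσ (hsupp (Finsupp.mem_support_iff.mpr hc))
  -- assemble
  have traceT := aux_trace_restrict_span B Qt O (⨅ j, U j) hTspan hT
  have traceS := aux_trace_restrict_span B Qs O (⨆ j, U j) hSspan (fun x hx => hS hx)
  have traceAdd := aux_trace_add (⨆ j, U j) O hS (fun x hx => hS hx)
  have hsum : ∑ g ∈ Finset.univ.filter (· ∈ Qt), LinearMap.toMatrix B B O g g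
      = ∑ g ∈ Finset.univ.filter (· ∈ Qs), LinearMap.toMatrix B B O g g := by
    apply Finset.sum_subset
    · intro g hg
      rw [Finset.mem_filter] at *
      refine ⟨hg.1, ?_⟩
      have := hg.2
      exact ⟨⟨0, hN⟩, this ⟨0, hN⟩⟩
    · intro g hg hgn
      rw [Finset.mem_filter] at hg hgn
      exact keydiag g hg.2 (fun hgt => hgn ⟨hg.1, hgt⟩)
  rw [traceT, hsum, traceAdd, ← traceS]
  ring
end

section
/- Claim (2) of the tensor-trace lemma: Let O : V^{⊗N} → V^{⊗N} be a linear operator and let σ be a cyclic permutation of {1,…,N} such that O(U_j) ⊆ U_{σ(j)} for every j, 1 ≤ j ≤ N. Let p : V → V be any linear projection with p ∘ p = p and range W. Then trace((p ⊗ id_V^{⊗(N−1)}) ∘ O), the trace over V^{⊗N} of O composed with the projection acting in the first tensor factor, equals trace(O restricted to the O-invariant subspace T = ⋂_{j=1}^N U_j) (the canonical copy of W^{⊗N}). This expresses the paper's identity Tr_{W^{⊗N}} O = Tr_{U_1} O, where Tr_{U_1} denotes the trace over U_1 = W ⊗ V^{⊗(N−1)} obtained by first taking the partial trace over the last N−1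 factors. -/
open scoped TensorProduct

section TensorTraceAux

variable {K : Type*} [Field K] {V : Type*} [AddCommGroup V] [Module K V] {N : ℕ}

/-- The tensor power of a finite-dimensional space is finite-dimensional. -/
private lemma piTensorFin_finite [FiniteDimensional K V] (n : ℕ) :
    Module.Finite K (⨂[K] _ : Fin n, V) := by
  induction n with
  | zero =>
    exact Module.Finite.equiv
      (PiTensorProduct.isEmptyEquiv (ι := Fin 0) (R := K) (s := fun _ => V)).symm
  | succ n ih =>
    haveI := ih
    haveI : Module.Finite K (⨂[K] _ : Fin 1, V) :=
      Module.Finite.equiv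
        (PiTensorProduct.subsingletonEquiv (R := K) (s := fun _ => V) (0 : Fin 1)).symm
    exact Module.Finite.equiv
      ((TensorPower.mulEquiv (R := K) (M := V) (n := 1) (m := n)).trans
        (TensorPower.cast K V (by omega)))

variable (p : V →ₗ[K] V)

/-- The projection `p` acting in the `j`-th tensor factor. -/
private noncomputable def Pj (j : Fin N) : Module.End K (⨂[K] _ : Fin N, V) :=
  PiTensorProduct.map (fun i => if i = j then p else LinearMap.id)

private lemma Pj_tprod (j : Fin N) (f : Fin N → V) :
    Pj p j (PiTensorProduct.tprod K f) =
      PiTensorProduct.tprod K (fun i => if i = j then p (f i) else f i) := by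
  rw [Pj, PiTensorProduct.map_tprod]
  congr 1
  funext i
  split <;> rfl

private lemma Pj_mul (a b : Fin N) :
    Pj p a * Pj p b = PiTensorProduct.map
      (fun i => (if i = a then p else LinearMap.id) ∘ₗ (if i = b then p else LinearMap.id)) := by
  rw [Module.End.mul_eq_comp, Pj, Pj]
  exact (PiTensorProduct.map_comp (fun i : Fin N => if i = a then p else LinearMap.id)
    (fun i : Fin N => if i = b then p else LinearMap.id)).symm

private lemma Pj_comm (a b : Fin N) : Commute (Pj p a) (Pj p b) := by
  show Pj p a * Pj p b = Pj p b * Pj p a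
  rw [Pj_mul, Pj_mul]
  congr 1
  funext i
  by_cases ha : i = a
  · subst ha
    by_cases hb : i = b
    · subst hb; rfl
    · simp [hb]
  · by_cases hb : i = b
    · subst hb; simp [ha]
    · simp [ha, hb]

private lemma Pj_idem (hp : p ∘ₗ p = p) (a : Fin N) : Pj p a * Pj p a = Pj p a := by
  rw [Pj_mul]
  rw [Pj]
  congr 1
  funext i
  by_cases ha : i = a <;> simp [ha, hp]

variable (W : Submodule K V) (U : Fin N → Submodule K (⨂[K] _ : Fin N, V))
  (hU : ∀ j, U j = Submodule.span K
    {x | ∃ f : Fin N → V, f j ∈ W ∧ x = PiTensorProduct.tprod K f})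
  (hrange : LinearMap.range p = W)

include hU hrange in
private lemma Pj_mem (j : Fin N) (x : ⨂[K] _ : Fin N, V) : Pj p j x ∈ U j := by
  have hx : x ∈ Submodule.span K (Set.range (PiTensorProduct.tprod K)) := by
    rw [PiTensorProduct.span_tprod_eq_top]; trivial
  induction hx using Submodule.span_induction with
  | mem y hy =>
    obtain ⟨f, rfl⟩ := hy
    rw [Pj_tprod, hU j]
    apply Submodule.subset_span
    refine ⟨fun i => if i = j then p (f i) else f i, ?_, rfl⟩
    have heq : (fun i => if i = j then p (f i) else f i) j = p (f j) := by simp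
    rw [heq, ← hrange]
    exact ⟨f j, rfl⟩
  | zero => simp
  | add a b _ _ ha hb => rw [map_add]; exact Submodule.add_mem _ ha hb
  | smul c a _ ha => rw [map_smul]; exact Submodule.smul_mem _ _ ha

include hU hrange in
private lemma Pj_fix (hp : p ∘ₗ p = p) (j : Fin N) (x : ⨂[K] _ : Fin N, V)
    (hx : x ∈ U j) : Pj p j x = x := by
  have hpW : ∀ w ∈ W, p w = w := by
    intro w hw
    rw [← hrange] at hw
    obtain ⟨v, rfl⟩ := hw
    exact LinearMap.congr_fun hp v
  rw [hU j] at hx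
  induction hx using Submodule.span_induction with
  | mem y hy =>
    obtain ⟨f, hfW, rfl⟩ := hy
    rw [Pj_tprod]
    congr 1
    funext i
    by_cases h : i = j
    · subst h; simp [hpW _ hfW]
    · simp [h]
  | zero => simp
  | add a b _ _ ha hb => rw [map_add, ha, hb]
  | smul c a _ ha => rw [map_smul, ha]

/-- The product of the projections `Pj` over a finite set of slots. -/
private noncomputable def Rprod (S : Finset (Fin N)) : Module.End K (⨂[K] _ : Fin N, V) :=
  S.noncommProd (Pj p) (fun a _ b _ _ => Pj_comm p a b)

private lemma Rprod_empty : Rprod p (∅ : Finset (Fin N)) = 1 :=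
  Finset.noncommProd_empty _ _

private lemma Rprod_insert (j : Fin N) (S : Finset (Fin N)) (hj : j ∉ S) :
    Rprod p (insert j S) = Pj p j * Rprod p S :=
  Finset.noncommProd_insert_of_notMem _ _ _ _ hj

private lemma Rprod_singleton (j : Fin N) : Rprod p ({j} : Finset (Fin N)) = Pj p j :=
  Finset.noncommProd_singleton _ _

private lemma Pj_commute_Rprod (j : Fin N) (S : Finset (Fin N)) :
    Commute (Pj p j) (Rprod p S) :=
  Finset.noncommProd_commute _ _ _ _ (fun b _ => Pj_comm p j b)

include hU hrange in
private lemma Rprod_mem (S : Finset (Fin N)) (j : Fin N) (hj : j ∈ S)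
    (x : ⨂[K] _ : Fin N, V) : Rprod p S x ∈ U j := by
  have h : Pj p j * Rprod p (S.erase j) = Rprod p S :=
    Finset.mul_noncommProd_erase S hj (Pj p) (fun a _ b _ _ => Pj_comm p a b)
  rw [← h, Module.End.mul_apply]
  exact Pj_mem p W U hU hrange j _

include hU hrange in
private lemma Rprod_fix (hp : p ∘ₗ p = p) (S : Finset (Fin N)) (x : ⨂[K] _ : Fin N, V)
    (hx : ∀ j ∈ S, x ∈ U j) : Rprod p S x = x := by
  classical
  induction S using Finset.induction with
  | empty => rw [Rprod_empty]; rfl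
  | @insert j S hj ih =>
    rw [Rprod_insert p j S hj, Module.End.mul_apply,
      ih (fun k hk => hx k (Finset.mem_insert_of_mem hk))]
    exact Pj_fix p W U hU hrange hp j x (hx j (Finset.mem_insert_self j S))

private lemma Rprod_union (hp : p ∘ₗ p = p) (A B : Finset (Fin N)) :
    Rprod p A * Rprod p B = Rprod p (A ∪ B) := by
  classical
  induction B using Finset.induction with
  | empty => rw [Rprod_empty, mul_one, Finset.union_empty]
  | @insert b B hb ih =>
    rw [Rprod_insert p b B hb, ← mul_assoc, (Pj_commute_Rprod p b A).symm.eq, mul_assoc, ih]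
    by_cases hbA : b ∈ A
    · have hbAB : b ∈ A ∪ B := Finset.mem_union_left _ hbA
      have h : Pj p b * Rprod p ((A ∪ B).erase b) = Rprod p (A ∪ B) :=
        Finset.mul_noncommProd_erase _ hbAB (Pj p) (fun a _ c _ _ => Pj_comm p a c)
      have h2 : Pj p b * Rprod p (A ∪ B) = Rprod p (A ∪ B) := by
        rw [← h, ← mul_assoc, Pj_idem p hp]
      rw [h2, Finset.union_insert, Finset.insert_eq_self.mpr hbAB]
    · by_cases hbB : b ∈ A ∪ B
      · exact absurd ((Finset.mem_union.mp hbB).resolve_left hbA) hb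
      · rw [← Rprod_insert p b (A ∪ B) hbB, Finset.union_insert]

end TensorTraceAux

/-- **Claim (2) of the tensor-trace lemma.**
Let `K` be a field, `V` a finite-dimensional `K`-vector space, `W ⊆ V` a subspace and
`N ≥ 1`.  Inside the `N`-th tensor power of `V`, let `U j` be the subspace spanned by
elementary tensors whose `j`-th factor lies in `W`.  Let `O` be a linear operator on the
tensor power and `σ` a cyclic permutation of `{1,…,N}` with `O (U j) ⊆ U (σ j)` for all
`j`.  Let `p : V → V` be a linear projection (`p ∘ p = p`) with range `W`.  Then the
intersection `T = ⋂ j, U j` is invariant under `O`, and the trace over the full tensor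
power of `(p ⊗ id^{⊗(N−1)}) ∘ O` (the projection acting in the first factor) equals the
trace of `O` restricted to `T` — the paper's identity `Tr_{W^{⊗N}} O = Tr_{U_1} O`. -/
theorem tensor_trace_lemma_claim2 {K : Type*} [Field K]
    {V : Type*} [AddCommGroup V] [Module K V] [FiniteDimensional K V]
    (W : Submodule K V) (N : ℕ) (hN : 1 ≤ N)
    (O : (⨂[K] _ : Fin N, V) →ₗ[K] (⨂[K] _ : Fin N, V))
    (σ : Equiv.Perm (Fin N)) (hσ : ∀ i j : Fin N, ∃ m : ℕ, (σ ^ m) i = j)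
    (U : Fin N → Submodule K (⨂[K] _ : Fin N, V))
    (hU : ∀ j, U j = Submodule.span K
      {x | ∃ f : Fin N → V, f j ∈ W ∧ x = PiTensorProduct.tprod K f})
    (hO : ∀ j, (U j).map O ≤ U (σ j))
    (p : V →ₗ[K] V) (hp : p ∘ₗ p = p) (hrange : LinearMap.range p = W) :
    (∀ x ∈ ⨅ j, U j, O x ∈ ⨅ j, U j) ∧
    ∀ (hT : ∀ x ∈ ⨅ j, U j, O x ∈ ⨅ j, U j),
      LinearMap.trace K _
        ((PiTensorProduct.map
          (fun i : Fin N => if i = (⟨0, hN⟩ : Fin N) then p else LinearMap.id)) ∘ₗ O) =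
      LinearMap.trace K _ (O.restrict hT) := by
  classical
  haveI : Module.Finite K (⨂[K] _ : Fin N, V) := piTensorFin_finite N
  have hO' : ∀ (j : Fin N), ∀ x ∈ U j, O x ∈ U (σ j) := fun j x hx =>
    hO j (Submodule.mem_map_of_mem hx)
  have hTinv : ∀ x ∈ ⨅ j, U j, O x ∈ ⨅ j, U j := by
    intro x hx
    rw [Submodule.mem_iInf] at hx ⊢
    intro j
    have := hO' (σ⁻¹ j) x (hx (σ⁻¹ j))
    simpa using this
  refine ⟨hTinv, fun hT => ?_⟩
  set j₀ : Fin N := ⟨0, hN⟩ with hj₀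
  -- the iterated orbit sets
  set Sm : ℕ → Finset (Fin N) :=
    fun m => (Finset.range (m + 1)).image (fun k => (σ ^ k) j₀) with hSm
  have hS0 : Sm 0 = {j₀} := by
    simp [hSm]
  have hSsucc : ∀ m, Sm (m + 1) = Sm m ∪ (Sm m).image σ := by
    intro m
    ext j
    simp only [hSm, Finset.mem_union, Finset.mem_image, Finset.mem_range]
    constructor
    · rintro ⟨k, hk, rfl⟩
      rcases Nat.lt_or_ge k (m + 1) with h | h
      · exact Or.inl ⟨k, h, rfl⟩
      · have hk' : k = m + 1 := by omega
        subst hk'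
        refine Or.inr ⟨(σ ^ m) j₀, ⟨m, by omega, rfl⟩, ?_⟩
        rw [pow_succ']
        rfl
    · rintro (⟨k, hk, rfl⟩ | ⟨y, ⟨k, hk, rfl⟩, rfl⟩)
      · exact ⟨k, by omega, rfl⟩
      · refine ⟨k + 1, by omega, ?_⟩
        rw [pow_succ']
        rfl
  -- the key trace chain
  have key : ∀ m, LinearMap.trace K _ (Rprod p (Sm m) * O) =
      LinearMap.trace K _ (Pj p j₀ * O) := by
    intro m
    induction m with
    | zero => rw [hS0, Rprod_singleton]
    | succ m ih =>
      have habs : Rprod p ((Sm m).image σ) * (O * Rprod p (Sm m)) = O * Rprod p (Sm m) := by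
        apply LinearMap.ext
        intro x
        rw [Module.End.mul_apply]
        apply Rprod_fix p W U hU hrange hp
        intro j' hj'
        obtain ⟨j, hj, rfl⟩ := Finset.mem_image.mp hj'
        rw [Module.End.mul_apply]
        exact hO' j _ (Rprod_mem p W U hU hrange (Sm m) j hj x)
      calc LinearMap.trace K _ (Rprod p (Sm (m + 1)) * O)
          = LinearMap.trace K _ (Rprod p (Sm m) * (Rprod p ((Sm m).image σ) * O)) := by
            rw [hSsucc m, ← Rprod_union p hp, mul_assoc]
        _ = LinearMap.trace K _ (Rprod p ((Sm m).image σ) * (O * Rprod p (Sm m))) := by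
            rw [LinearMap.trace_mul_comm, mul_assoc]
        _ = LinearMap.trace K _ (O * Rprod p (Sm m)) := by rw [habs]
        _ = LinearMap.trace K _ (Rprod p (Sm m) * O) := LinearMap.trace_mul_comm K _ _
        _ = LinearMap.trace K _ (Pj p j₀ * O) := ih
  -- pick m with full orbit
  obtain ⟨Mb, hMb⟩ : ∃ m, Sm m = Finset.univ := by
    choose g hg using hσ j₀
    refine ⟨Finset.univ.sup g, Finset.eq_univ_iff_forall.mpr fun j => ?_⟩
    exact Finset.mem_image.mpr ⟨g j,
      Finset.mem_range.mpr (Nat.lt_succ_of_le (Finset.le_sup (Finset.mem_univ j))), hg j⟩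
  set Pi0 : Module.End K (⨂[K] _ : Fin N, V) := Rprod p (Finset.univ : Finset (Fin N)) with hPi0
  have hPidem : Pi0 * Pi0 = Pi0 := by
    rw [hPi0, Rprod_union p hp, Finset.union_self]
  have hPmem0 : ∀ x, Pi0 x ∈ ⨅ j, U j := by
    intro x
    rw [Submodule.mem_iInf]
    intro j
    exact Rprod_mem p W U hU hrange _ j (Finset.mem_univ j) x
  have hPfix0 : ∀ x ∈ ⨅ j, U j, Pi0 x = x := by
    intro x hx
    rw [Submodule.mem_iInf] at hx
    exact Rprod_fix p W U hU hrange hp _ x (fun j _ => hx j)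
  -- reduce the goal to a statement about `Pi0 * O`
  have hgoal1 : (PiTensorProduct.map
      (fun i : Fin N => if i = (⟨0, hN⟩ : Fin N) then p else LinearMap.id)) ∘ₗ O
      = Pj p j₀ * O := rfl
  rw [hgoal1, ← key Mb, hMb, ← hPi0]
  -- now: trace (Pi0 * O) = trace (O.restrict hT)
  have h1 : LinearMap.trace K _ (Pi0 * O * Pi0) = LinearMap.trace K _ (Pi0 * O) := by
    rw [LinearMap.trace_mul_comm, ← mul_assoc, hPidem]
  rw [← h1]
  -- direct sum decomposition
  set A : Bool → Submodule K (⨂[K] _ : Fin N, V) :=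
    fun b => bif b then (⨅ j, U j) else LinearMap.ker Pi0 with hA
  have hisProj : LinearMap.IsProj (⨅ j, U j) Pi0 := ⟨hPmem0, hPfix0⟩
  have hinternal : DirectSum.IsInternal A := by
    rw [DirectSum.isInternal_submodule_iff_isCompl A (i := true) (j := false)
      (by simp) (by ext b; cases b <;> simp)]
    exact hisProj.isCompl
  have hmapsto : ∀ b : Bool, Set.MapsTo (Pi0 * O * Pi0) (A b) (A b) := by
    intro b
    cases b
    · intro x hx
      have hx' : Pi0 x = 0 := hx
      show (Pi0 * O * Pi0) x ∈ LinearMap.ker Pi0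
      rw [Module.End.mul_apply, Module.End.mul_apply, hx', map_zero, map_zero]
      exact Submodule.zero_mem _
    · intro x hx
      have hx' : x ∈ ⨅ j, U j := hx
      show (Pi0 * O * Pi0) x ∈ ⨅ j, U j
      rw [Module.End.mul_apply, Module.End.mul_apply, hPfix0 x hx']
      exact hPmem0 _
  haveI hAfin : ∀ b : Bool, Module.Finite K (A b) := by
    intro b
    cases b
    · exact inferInstanceAs (Module.Finite K (LinearMap.ker Pi0))
    · exact inferInstanceAs (Module.Finite K (⨅ j, U j : Submodule K (⨂[K] _ : Fin N, V)))
  haveI hAfree : ∀ b : Bool, Module.Free K (A b) := by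
    intro b
    cases b
    · exact inferInstanceAs (Module.Free K (LinearMap.ker Pi0))
    · exact inferInstanceAs (Module.Free K (⨅ j, U j : Submodule K (⨂[K] _ : Fin N, V)))
  have hsum := LinearMap.trace_eq_sum_trace_restrict hinternal hmapsto
  rw [Fintype.sum_bool] at hsum
  have hfalse : LinearMap.trace K _ ((Pi0 * O * Pi0).restrict (hmapsto false)) = 0 := by
    have : (Pi0 * O * Pi0).restrict (hmapsto false) = 0 := by
      apply LinearMap.ext
      intro x
      apply Subtype.ext
      show (Pi0 * O * Pi0) (x : ⨂[K] _ : Fin N, V) = ((0 : ↥(A false) →ₗ[K] ↥(A false)) x : ⨂[K] _ : Fin N, V)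
      have hx' : Pi0 (x : ⨂[K] _ : Fin N, V) = 0 := x.2
      rw [Module.End.mul_apply, Module.End.mul_apply, hx', map_zero, map_zero]
      rfl
    rw [this, map_zero]
  have htrue : (Pi0 * O * Pi0).restrict (hmapsto true) = O.restrict hT := by
    apply LinearMap.ext
    intro x
    apply Subtype.ext
    show (Pi0 * O * Pi0) (x : ⨂[K] _ : Fin N, V) = O (x : ⨂[K] _ : Fin N, V)
    have hx' : (x : ⨂[K] _ : Fin N, V) ∈ ⨅ j, U j := x.2
    rw [Module.End.mul_apply, Module.End.mul_apply, hPfix0 _ hx', hPfix0 _ (hT _ hx')]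
  rw [hsum, hfalse, add_zero, htrue]
  rfl
end

section
/- For all integers m₁, m₂ and every natural number n, the two elements of the rational function field ℚ(q, t₁, t₂) defined by S⁺ = t₁^{−m₂} · q^{m₂ + m₁m₂ + n(n+1)/2} · ∏_{l=1}^{n} ( (q^{−m₂−l} − t₂^{−1})(q^{m₁−n+l} − 1) / (q^{l} − 1) ) and S⁻ = t₁^{−n} · t₂^{m₁+n} · q^{−m₁ − m₁m₂ − n(n+1)/2} · ∏_{l=1}^{n} ( (q^{m₁+l} − t₁)(q^{−m₂+n−l} − 1) / (q^{−l} − 1) ) both lie in the subring ℤ[q, q^{−1}, t₁, t₁^{−1}, t₂, t₂^{−1}] of Laurent polynomials with integer coefficients. -/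
/-- The rational function field ℚ(q, t₁, t₂) in three indeterminates. -/
noncomputable abbrev RatFuncThree : Type :=
  FractionRing (MvPolynomial (Fin 3) ℚ)

/-- The image of the indeterminate `i` in ℚ(q, t₁, t₂). -/
noncomputable abbrev rfVar (i : Fin 3) : RatFuncThree :=
  algebraMap (MvPolynomial (Fin 3) ℚ) RatFuncThree (MvPolynomial.X i)

namespace LemInt

lemma algebraMap_inj :
    Function.Injective (algebraMap (MvPolynomial (Fin 3) ℚ) RatFuncThree) :=
  IsFractionRing.injective _ _

lemma rfVar_ne_zero (i : Fin 3) : rfVar i ≠ 0 := by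
  have h : (MvPolynomial.X i : MvPolynomial (Fin 3) ℚ) ≠ 0 := MvPolynomial.X_ne_zero i
  simpa [map_eq_zero_iff _ algebraMap_inj] using h

lemma q_pow_sub_one_ne {l : ℕ} (hl : 1 ≤ l) : (rfVar 0) ^ (l : ℤ) - 1 ≠ 0 := by
  rw [zpow_natCast]
  have hpoly : (MvPolynomial.X 0 : MvPolynomial (Fin 3) ℚ) ^ l - 1 ≠ 0 := by
    intro h
    have h2 := congrArg (MvPolynomial.eval (fun _ => (2:ℚ))) h
    simp at h2
    have h3 : (1:ℚ) < 2 ^ l := one_lt_pow₀ one_lt_two (by omega)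
    rw [sub_eq_zero] at h2
    rw [h2] at h3
    exact lt_irrefl _ h3
  intro h
  apply hpoly
  apply algebraMap_inj
  rw [map_sub, map_pow, map_one]
  simpa using h

/-- Generalized Gaussian binomial `[m choose k]_q` as a rational function. -/
noncomputable def bfun (m : ℤ) (k : ℕ) : RatFuncThree :=
  ∏ l ∈ Finset.Icc 1 k, ((rfVar 0) ^ (m - (k : ℤ) + (l : ℤ)) - 1) / ((rfVar 0) ^ (l : ℤ) - 1)

lemma bfun_zero (m : ℤ) : bfun m 0 = 1 := by simp [bfun]

lemma bfun_succ (m : ℤ) (k : ℕ) :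
    bfun m (k + 1) * ((rfVar 0) ^ ((k : ℤ) + 1) - 1)
      = bfun (m - 1) k * ((rfVar 0) ^ m - 1) := by
  unfold bfun
  rw [Finset.prod_Icc_succ_top (Nat.le_add_left 1 k)]
  have h1 : ∀ l ∈ Finset.Icc 1 k,
      ((rfVar 0) ^ (m - ((k:ℕ)+1 : ℕ) + (l : ℤ)) - 1) / ((rfVar 0) ^ (l : ℤ) - 1)
        = ((rfVar 0) ^ ((m - 1) - (k : ℤ) + (l : ℤ)) - 1) / ((rfVar 0) ^ (l : ℤ) - 1) := by
    intro l hl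
    congr 2
    push_cast
    ring
  rw [Finset.prod_congr rfl h1]
  have h2 : (m - ((k:ℕ)+1 : ℕ) + (((k:ℕ)+1 : ℕ) : ℤ)) = m := by push_cast; ring
  rw [h2]
  have h3 : (((k:ℕ)+1 : ℕ) : ℤ) = (k : ℤ) + 1 := by push_cast; ring
  rw [h3]
  have hD : (rfVar 0) ^ ((k : ℤ) + 1) - 1 ≠ 0 := by
    have h4 := q_pow_sub_one_ne (l := k + 1) (by omega)
    rwa [h3] at h4
  rw [mul_assoc, div_mul_cancel₀ _ hD]

lemma bfun_shift (k : ℕ) : ∀ m : ℤ,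
    bfun m k * ((rfVar 0) ^ (m - (k : ℤ)) - 1) = bfun (m - 1) k * ((rfVar 0) ^ m - 1) := by
  induction k with
  | zero => intro m; simp [bfun]
  | succ k ih =>
    intro m
    have hD : (rfVar 0) ^ ((k : ℤ) + 1) - 1 ≠ 0 := by
      have h4 := q_pow_sub_one_ne (l := k + 1) (by omega)
      rwa [(by push_cast; ring : (((k:ℕ)+1 : ℕ) : ℤ) = (k : ℤ) + 1)] at h4
    apply mul_right_cancel₀ hD
    have h1 := bfun_succ m k
    have h2 := bfun_succ (m - 1) k
    have h3 := ih (m - 1)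
    have e1 : m - (((k:ℕ)+1 : ℕ) : ℤ) = m - 1 - (k : ℤ) := by push_cast; ring
    rw [e1]
    linear_combination ((rfVar 0) ^ (m - 1 - (k:ℤ)) - 1) * h1 - ((rfVar 0) ^ m - 1) * h2 +
      ((rfVar 0) ^ m - 1) * h3

lemma bfun_pascal (m : ℤ) (k : ℕ) :
    bfun (m + 1) (k + 1) = bfun m k + (rfVar 0) ^ ((k : ℤ) + 1) * bfun m (k + 1) := by
  have hD : (rfVar 0) ^ ((k : ℤ) + 1) - 1 ≠ 0 := by
    have h4 := q_pow_sub_one_ne (l := k + 1) (by omega)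
    rwa [(by push_cast; ring : (((k:ℕ)+1 : ℕ) : ℤ) = (k : ℤ) + 1)] at h4
  apply mul_right_cancel₀ hD
  have h1 := bfun_succ (m + 1) k
  rw [add_sub_cancel_right] at h1
  have h2 := bfun_succ m k
  have h3 := bfun_shift k m
  have hq : (rfVar 0) ^ ((k : ℤ) + 1) * (rfVar 0) ^ (m - (k : ℤ)) = (rfVar 0) ^ (m + 1) := by
    rw [← zpow_add₀ (rfVar_ne_zero 0)]
    ring_nf
  linear_combination h1 + (rfVar 0) ^ ((k : ℤ) + 1) * h3 - (rfVar 0) ^ ((k : ℤ) + 1) * h2 -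
    bfun m k * hq

lemma zpow_mem' {R : Subring RatFuncThree} {x : RatFuncThree} (hx : x ∈ R)
    (hx' : x⁻¹ ∈ R) (m : ℤ) : x ^ m ∈ R := by
  rcases m with n | n
  · simpa using pow_mem hx n
  · rw [zpow_negSucc, ← inv_pow]
    exact pow_mem hx' _

lemma bfun_mem {R : Subring RatFuncThree} (hq : rfVar 0 ∈ R) (hq' : (rfVar 0)⁻¹ ∈ R) :
    ∀ (k : ℕ) (m : ℤ), bfun m k ∈ R := by
  intro k
  induction k with
  | zero => intro m; rw [bfun_zero]; exact one_mem R
  | succ k ih =>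
    have key : ∀ m : ℤ, bfun m (k + 1) ∈ R → bfun (m + 1) (k + 1) ∈ R := by
      intro m hm
      rw [bfun_pascal]
      exact add_mem (ih m) (mul_mem (zpow_mem' hq hq' _) hm)
    have key' : ∀ m : ℤ, bfun (m + 1) (k + 1) ∈ R → bfun m (k + 1) ∈ R := by
      intro m hm
      have hp := bfun_pascal m k
      have h0 : (rfVar 0) ^ ((k : ℤ) + 1) ≠ 0 := zpow_ne_zero _ (rfVar_ne_zero 0)
      have heq : bfun m (k + 1)
          = ((rfVar 0) ^ ((k : ℤ) + 1))⁻¹ * (bfun (m + 1) (k + 1) - bfun m k) := by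
        rw [hp]
        field_simp
        ring
      rw [heq]
      have hinv : ((rfVar 0) ^ ((k : ℤ) + 1))⁻¹ ∈ R := by
        rw [← zpow_neg]
        exact zpow_mem' hq hq' _
      exact mul_mem hinv (sub_mem hm (ih m))
    intro m
    induction m using Int.induction_on with
    | zero =>
      have hz : bfun 0 (k + 1) = 0 := by
        apply Finset.prod_eq_zero (Finset.mem_Icc.mpr ⟨by omega, le_refl (k+1)⟩)
        have e : (0 : ℤ) - ((k + 1 : ℕ) : ℤ) + ((k + 1 : ℕ) : ℤ) = 0 := by ring
        rw [e, zpow_zero, sub_self, zero_div]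
      rw [hz]
      exact zero_mem R
    | succ i hi => exact key i hi
    | pred i hi =>
      apply key' (-(i : ℤ) - 1)
      simpa using hi

lemma factor_eq (m₁ m₂ : ℤ) (n : ℕ) {l : ℕ} (hl : 1 ≤ l) :
    ((rfVar 0 ^ (m₁ + (l : ℤ)) - rfVar 1) * (rfVar 0 ^ (-m₂ + (n : ℤ) - l) - 1)) /
        (rfVar 0 ^ (-(l : ℤ)) - 1)
      = ((rfVar 0 ^ (m₁ + (l : ℤ)) - rfVar 1) * rfVar 0 ^ ((n : ℤ) - m₂)) *
        ((rfVar 0 ^ (m₂ - (n : ℤ) + l) - 1) / (rfVar 0 ^ (l : ℤ) - 1)) := by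
  have hQ : rfVar 0 ≠ 0 := rfVar_ne_zero 0
  have hinv : rfVar 0 ^ (-(l:ℤ)) * rfVar 0 ^ (l:ℤ) = 1 := by
    rw [← zpow_add₀ hQ]
    simp
  have e1 : rfVar 0 ^ (-(l:ℤ)) - 1 = -(rfVar 0 ^ (-(l:ℤ))) * (rfVar 0 ^ (l:ℤ) - 1) := by
    linear_combination hinv
  have hA : rfVar 0 ^ ((n:ℤ) - m₂) * rfVar 0 ^ (-(l:ℤ)) = rfVar 0 ^ (-m₂ + (n:ℤ) - (l:ℤ)) := by
    rw [← zpow_add₀ hQ]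
    ring_nf
  have hmul : rfVar 0 ^ ((n:ℤ) - m₂) * rfVar 0 ^ (-(l:ℤ)) * rfVar 0 ^ (m₂ - (n:ℤ) + (l:ℤ)) = 1 := by
    rw [hA, ← zpow_add₀ hQ]
    have : -m₂ + (n:ℤ) - (l:ℤ) + (m₂ - (n:ℤ) + (l:ℤ)) = 0 := by ring
    rw [this, zpow_zero]
  have e2 : rfVar 0 ^ (-m₂ + (n:ℤ) - (l:ℤ)) - 1
      = -(rfVar 0 ^ ((n:ℤ) - m₂) * rfVar 0 ^ (-(l:ℤ))) * (rfVar 0 ^ (m₂ - (n:ℤ) + (l:ℤ)) - 1) := by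
    linear_combination hmul - hA
  rw [e1, e2]
  have hsplit : (rfVar 0 ^ (m₁ + (l : ℤ)) - rfVar 1) *
      (-(rfVar 0 ^ ((n:ℤ) - m₂) * rfVar 0 ^ (-(l:ℤ))) * (rfVar 0 ^ (m₂ - (n:ℤ) + (l:ℤ)) - 1))
      = (-(rfVar 0 ^ (-(l:ℤ)))) * ((rfVar 0 ^ (m₁ + (l : ℤ)) - rfVar 1) *
          rfVar 0 ^ ((n:ℤ) - m₂) * (rfVar 0 ^ (m₂ - (n:ℤ) + (l:ℤ)) - 1)) := by
    ring
  rw [hsplit, mul_div_mul_left _ _ (neg_ne_zero.mpr (zpow_ne_zero _ hQ)), mul_div_assoc]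

end LemInt

theorem twisted_R_matrix_entries_are_Laurent' (m₁ m₂ : ℤ) (n : ℕ) :
    (rfVar 1 ^ (-m₂) * rfVar 0 ^ (m₂ + m₁ * m₂ + ((n * (n + 1)) / 2 : ℕ)) *
        ∏ l ∈ Finset.Icc 1 n,
          ((rfVar 0 ^ (-m₂ - (l : ℤ)) - (rfVar 2)⁻¹) * (rfVar 0 ^ (m₁ - (n : ℤ) + l) - 1)) /
            (rfVar 0 ^ (l : ℤ) - 1)) ∈
      Subring.closure {rfVar 0, (rfVar 0)⁻¹, rfVar 1, (rfVar 1)⁻¹, rfVar 2, (rfVar 2)⁻¹} ∧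
    (rfVar 1 ^ (-(n : ℤ)) * rfVar 2 ^ (m₁ + (n : ℤ)) *
        rfVar 0 ^ (-m₁ - m₁ * m₂ - ((n * (n + 1)) / 2 : ℕ)) *
        ∏ l ∈ Finset.Icc 1 n,
          ((rfVar 0 ^ (m₁ + (l : ℤ)) - rfVar 1) * (rfVar 0 ^ (-m₂ + (n : ℤ) - l) - 1)) /
            (rfVar 0 ^ (-(l : ℤ)) - 1)) ∈
      Subring.closure {rfVar 0, (rfVar 0)⁻¹, rfVar 1, (rfVar 1)⁻¹, rfVar 2, (rfVar 2)⁻¹} := by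
  open LemInt in
  set R : Subring RatFuncThree :=
    Subring.closure {rfVar 0, (rfVar 0)⁻¹, rfVar 1, (rfVar 1)⁻¹, rfVar 2, (rfVar 2)⁻¹} with hR
  have hq : rfVar 0 ∈ R := Subring.subset_closure (by simp)
  have hq' : (rfVar 0)⁻¹ ∈ R := Subring.subset_closure (by simp)
  have ht₁ : rfVar 1 ∈ R := Subring.subset_closure (by simp)
  have ht₁' : (rfVar 1)⁻¹ ∈ R := Subring.subset_closure (by simp)
  have ht₂ : rfVar 2 ∈ R := Subring.subset_closure (by simp)
  have ht₂' : (rfVar 2)⁻¹ ∈ R := Subring.subset_closure (by simp)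
  constructor
  · have hprod : (∏ l ∈ Finset.Icc 1 n,
        ((rfVar 0 ^ (-m₂ - (l : ℤ)) - (rfVar 2)⁻¹) * (rfVar 0 ^ (m₁ - (n : ℤ) + l) - 1)) /
          (rfVar 0 ^ (l : ℤ) - 1))
        = (∏ l ∈ Finset.Icc 1 n, (rfVar 0 ^ (-m₂ - (l : ℤ)) - (rfVar 2)⁻¹)) * bfun m₁ n := by
      rw [bfun, ← Finset.prod_mul_distrib]
      exact Finset.prod_congr rfl fun l hl => mul_div_assoc _ _ _
    rw [hprod]
    refine mul_mem (mul_mem (zpow_mem' ht₁ ht₁' _) (zpow_mem' hq hq' _))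
      (mul_mem (prod_mem fun l hl => sub_mem (zpow_mem' hq hq' _) ht₂')
        (bfun_mem hq hq' n m₁))
  · have hprod : (∏ l ∈ Finset.Icc 1 n,
        ((rfVar 0 ^ (m₁ + (l : ℤ)) - rfVar 1) * (rfVar 0 ^ (-m₂ + (n : ℤ) - l) - 1)) /
          (rfVar 0 ^ (-(l : ℤ)) - 1))
        = (∏ l ∈ Finset.Icc 1 n,
            ((rfVar 0 ^ (m₁ + (l : ℤ)) - rfVar 1) * rfVar 0 ^ ((n : ℤ) - m₂))) * bfun m₂ n := by
      rw [bfun, ← Finset.prod_mul_distrib]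
      refine Finset.prod_congr rfl fun l hl => ?_
      exact factor_eq m₁ m₂ n (Finset.mem_Icc.mp hl).1
    rw [hprod]
    refine mul_mem (mul_mem (mul_mem (zpow_mem' ht₁ ht₁' _) (zpow_mem' ht₂ ht₂' _))
      (zpow_mem' hq hq' _))
      (mul_mem (prod_mem fun l hl => mul_mem (sub_mem (zpow_mem' hq hq' _) ht₁)
        (zpow_mem' hq hq' _)) (bfun_mem hq hq' n m₂))

/-- **Lemma [lem.int].**
For all integers `m₁, m₂` and every natural number `n`, the elements
`S⁺ = t₁^{−m₂} q^{m₂ + m₁m₂ + n(n+1)/2}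
       ∏_{l=1}^{n} ((q^{−m₂−l} − t₂⁻¹)(q^{m₁−n+l} − 1)/(q^l − 1))` and
`S⁻ = t₁^{−n} t₂^{m₁+n} q^{−m₁ − m₁m₂ − n(n+1)/2}
       ∏_{l=1}^{n} ((q^{m₁+l} − t₁)(q^{−m₂+n−l} − 1)/(q^{−l} − 1))`
of ℚ(q, t₁, t₂) lie in the subring ℤ[q^{±1}, t₁^{±1}, t₂^{±1}] of integer Laurent
polynomials, i.e. the subring generated by `q, q⁻¹, t₁, t₁⁻¹, t₂, t₂⁻¹`. -/
theorem twisted_R_matrix_entries_are_Laurent (m₁ m₂ : ℤ) (n : ℕ) :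
    let q : RatFuncThree := rfVar 0
    let t₁ : RatFuncThree := rfVar 1
    let t₂ : RatFuncThree := rfVar 2
    let Laurent : Subring RatFuncThree :=
      Subring.closure {q, q⁻¹, t₁, t₁⁻¹, t₂, t₂⁻¹}
    (t₁ ^ (-m₂) * q ^ (m₂ + m₁ * m₂ + ((n * (n + 1)) / 2 : ℕ)) *
        ∏ l ∈ Finset.Icc 1 n,
          ((q ^ (-m₂ - (l : ℤ)) - t₂⁻¹) * (q ^ (m₁ - (n : ℤ) + l) - 1)) /
            (q ^ (l : ℤ) - 1)) ∈ Laurent ∧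
    (t₁ ^ (-(n : ℤ)) * t₂ ^ (m₁ + (n : ℤ)) *
        q ^ (-m₁ - m₁ * m₂ - ((n * (n + 1)) / 2 : ℕ)) *
        ∏ l ∈ Finset.Icc 1 n,
          ((q ^ (m₁ + (l : ℤ)) - t₁) * (q ^ (-m₂ + (n : ℤ) - l) - 1)) /
            (q ^ (-(l : ℤ)) - 1)) ∈ Laurent := by
  exact twisted_R_matrix_entries_are_Laurent' m₁ m₂ n
end

section
/- Claim (1) of Corollary [cor.expand]: There exists a family of polynomials T^{1,+}_{n,k} ∈ ℚ[x, y, z], indexed by integers n, k ≥ 0, with T^{1,+}_{0,0} = 1, with deg_x T^{1,+}_{n,k} ≤ k and with total degree of T^{1,+}_{n,k} in the pair of variables (y, z) jointly at most n + k, such that for all integers m₁, m₂, γ and every natural number n the following identity holds in ℚ[[h]]: (1+h)^{(m₁+1)m₂ + n(n+1)/2} · ∏_{l=1}^{n} ( ((1+h)^{−m₂−l} − (1+h)^{−γ}) · ((1+h)^{m₁−n+l} − 1) / ((1+h)^{l} − 1) ) = C(m₁, n) · Σ_{k=0}^{∞} T^{1,+}_{n,k}(m₁, m₂, γ) · h^{n+k};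 in particular the left-hand side is divisible by h^n in ℚ[[h]]. -/
set_option linter.unusedSectionVars false
set_option maxHeartbeats 1000000


/-- The field of fractions of ℚ[[h]], in which the divisions appearing in the
expansion are honest field operations; ℚ[[h]] embeds into it. -/
noncomputable abbrev QPSField : Type :=
  FractionRing (PowerSeries ℚ)

/-- The embedding of the power-series ring ℚ[[h]] into its fraction field. -/
noncomputable abbrev qpsEmb : PowerSeries ℚ →+* QPSField :=
  algebraMap (PowerSeries ℚ) QPSField

/-- The invertible element `1 + h` of ℚ[[h]], viewed in the fraction field. -/
noncomputable abbrev qhElt : QPSField := qpsEmb (1 + PowerSeries.X)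



open Finset PowerSeries

section Gch
variable {A : Type*} [CommRing A] [Algebra ℚ A] [Module ℚ≥0 A]

/-- Generalized binomial coefficient in a ℚ-algebra. -/
noncomputable def gch (c : A) (k : ℕ) : A :=
  (k.factorial : ℚ)⁻¹ • ∏ i ∈ Finset.range k, (c - i)

lemma descPochhammer_smeval_prod (c : A) (k : ℕ) :
    (descPochhammer ℤ k).smeval c = ∏ i ∈ Finset.range k, (c - i) := by
  induction k with
  | zero => simp [descPochhammer_zero, Polynomial.smeval_one]
  | succ k ih =>
    rw [descPochhammer_succ_right, Polynomial.smeval_mul, ih, Finset.prod_range_succ]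
    congr 1
    rw [Polynomial.smeval_sub, Polynomial.smeval_X, Polynomial.smeval_natCast]
    simp

lemma gch_eq_choose (c : A) (k : ℕ) : gch c k = Ring.choose c k := by
  have h := Ring.descPochhammer_eq_factorial_smul_choose c k
  rw [descPochhammer_smeval_prod] at h
  rw [gch, h, ← Nat.cast_smul_eq_nsmul ℚ, smul_smul,
    inv_mul_cancel₀ (by exact_mod_cast Nat.factorial_ne_zero k), one_smul]

lemma gch_add (c d : A) (k : ℕ) :
    gch (c + d) k = ∑ ij ∈ Finset.HasAntidiagonal.antidiagonal k, gch c ij.1 * gch d ij.2 := by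
  simp only [gch_eq_choose]
  exact Ring.add_choose_eq k (Commute.all c d)

@[simp] lemma gch_zero_right (c : A) : gch c 0 = 1 := by simp [gch]

@[simp] lemma gch_one_right (c : A) : gch c 1 = c := by simp [gch]

lemma gch_zero_succ (k : ℕ) : gch (0 : A) (k + 1) = 0 := by
  rw [gch, Finset.prod_eq_zero (Finset.mem_range.2 (Nat.succ_pos k))] <;> simp

lemma gch_map {A' : Type*} [CommRing A'] [Algebra ℚ A'] [Module ℚ≥0 A'] (φ : A →ₐ[ℚ] A') (c : A) (k : ℕ) :
    φ (gch c k) = gch (φ c) k := by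
  rw [gch, gch, map_smul, map_prod]
  simp

end Gch

section Series
variable {A : Type*} [CommRing A] [Algebra ℚ A] [Module ℚ≥0 A]

/-- The binomial series `(1+X)^c`. -/
noncomputable def Bs (c : A) : PowerSeries A := PowerSeries.mk fun k => gch c k

/-- `((1+X)^c - 1)/X`. -/
noncomputable def Ds (c : A) : PowerSeries A := PowerSeries.mk fun k => gch c (k + 1)

@[simp] lemma coeff_Bs (c : A) (k : ℕ) : PowerSeries.coeff k (Bs c) = gch c k :=
  PowerSeries.coeff_mk _ _

@[simp] lemma coeff_Ds (c : A) (k : ℕ) : PowerSeries.coeff k (Ds c) = gch c (k + 1) :=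
  PowerSeries.coeff_mk _ _

lemma Bs_add (c d : A) : Bs (c + d) = Bs c * Bs d := by
  ext k
  rw [coeff_Bs, PowerSeries.coeff_mul, gch_add]
  simp

@[simp] lemma Bs_zero : Bs (0 : A) = 1 := by
  ext k
  cases k with
  | zero => simp
  | succ k => simp [gch_zero_succ, PowerSeries.coeff_one]

@[simp] lemma Ds_zero : Ds (0 : A) = 0 := by
  ext k; simp [gch_zero_succ]

@[simp] lemma constantCoeff_Bs' (c : A) : PowerSeries.constantCoeff (Bs c) = 1 := by
  rw [← PowerSeries.coeff_zero_eq_constantCoeff]; simp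

lemma X_mul_Ds (c : A) : PowerSeries.X * Ds c = Bs c - 1 := by
  ext k
  cases k with
  | zero => simp
  | succ k =>
    rw [PowerSeries.coeff_succ_X_mul, map_sub, coeff_Ds, coeff_Bs, PowerSeries.coeff_one]
    simp

@[simp] lemma constantCoeff_Bs (c : A) : PowerSeries.constantCoeff (Bs c) = 1 := by
  rw [← PowerSeries.coeff_zero_eq_constantCoeff]; simp

lemma Bs_map {A' : Type*} [CommRing A'] [Algebra ℚ A'] [Module ℚ≥0 A'] (φ : A →ₐ[ℚ] A') (c : A) :
    PowerSeries.map (φ : A →+* A') (Bs c) = Bs (φ c) := by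
  ext k; simp [PowerSeries.coeff_map, gch_map]

lemma Ds_map {A' : Type*} [CommRing A'] [Algebra ℚ A'] [Module ℚ≥0 A'] (φ : A →ₐ[ℚ] A') (c : A) :
    PowerSeries.map (φ : A →+* A') (Ds c) = Ds (φ c) := by
  ext k; simp [PowerSeries.coeff_map, gch_map]

lemma Bs_one_rat : Bs (1 : ℚ) = 1 + PowerSeries.X := by
  ext k
  rw [coeff_Bs, gch_eq_choose, show (1:ℚ) = ((1:ℕ):ℚ) by norm_num, Ring.choose_natCast]
  match k with
  | 0 => simp
  | 1 => simp
  | (k+2) => rw [Nat.choose_eq_zero_of_lt (by omega)]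
             simp [PowerSeries.coeff_one, PowerSeries.coeff_X, Nat.succ_ne_zero]

lemma Bs_natCast (m : ℕ) : Bs ((m : ℚ)) = (1 + PowerSeries.X) ^ m := by
  induction m with
  | zero => simpa using Bs_zero
  | succ m ih =>
    have : ((m + 1 : ℕ) : ℚ) = (m : ℚ) + 1 := by push_cast; ring
    rw [this, Bs_add, ih, Bs_one_rat, pow_succ]

lemma Bs_neg_mul (c : A) : Bs (-c) * Bs c = 1 := by
  rw [← Bs_add, neg_add_cancel, Bs_zero]

lemma Ds_zero' : Ds (0 : A) = 0 := Ds_zero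

lemma gch_one_right' (c : A) : gch c 1 = c := gch_one_right c

end Series


open Finset PowerSeries Polynomial


open Finset PowerSeries Polynomial

lemma qh_zpow (m : ℤ) : qhElt ^ m = qpsEmb (Bs ((m : ℚ))) := by
  match m with
  | (n : ℕ) =>
    rw [zpow_natCast, show (((n:ℤ)):ℚ) = ((n:ℕ):ℚ) by push_cast; ring, Bs_natCast, map_pow]
  | Int.negSucc n =>
    rw [zpow_negSucc]
    have h1 : qhElt ^ (n+1) = qpsEmb (Bs (((n+1:ℕ)):ℚ)) := by rw [Bs_natCast, map_pow]
    rw [h1]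
    refine (eq_inv_of_mul_eq_one_left ?_).symm
    rw [← map_mul, show ((Int.negSucc n : ℤ):ℚ) = -(((n+1:ℕ)):ℚ) by push_cast [Int.negSucc_eq]; ring,
      Bs_neg_mul, map_one]

lemma prod_X_sub_natCast_dvd (s : Finset ℕ) (p : Polynomial ℚ)
    (h : ∀ j ∈ s, p.eval ((j : ℕ) : ℚ) = 0) :
    (∏ j ∈ s, (Polynomial.X - ((j : ℕ) : Polynomial ℚ))) ∣ p := by
  induction s using Finset.induction_on generalizing p with
  | empty => simpa using one_dvd p
  | @insert a s ha ih =>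
    rw [Finset.prod_insert ha]
    have h1 : Polynomial.X - ((a : ℕ) : Polynomial ℚ) ∣ p := by
      rw [← Polynomial.C_eq_natCast]
      exact Polynomial.dvd_iff_isRoot.2 (h a (Finset.mem_insert_self a s))
    obtain ⟨q, hq⟩ := h1
    have hq' : ∀ j ∈ s, q.eval ((j : ℕ) : ℚ) = 0 := by
      intro j hj
      have hev := h j (Finset.mem_insert_of_mem hj)
      rw [hq, Polynomial.eval_mul, Polynomial.eval_sub, Polynomial.eval_X,
        Polynomial.eval_natCast] at hev
      have hja : ((j:ℕ):ℚ) - ((a:ℕ):ℚ) ≠ 0 := by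
        rw [sub_ne_zero]
        exact_mod_cast fun hc => ha (by exact_mod_cast hc ▸ hj)
      exact (mul_eq_zero.1 hev).resolve_left hja
    rw [hq]
    exact mul_dvd_mul_left _ (ih q hq')

/-- `((1+X)^l - 1)/X` for `l = 1..n`, multiplied together. -/
noncomputable def Wn (n : ℕ) : PowerSeries ℚ := ∏ l ∈ Finset.Icc 1 n, Ds ((l : ℚ))

lemma constantCoeff_Ds {A : Type*} [CommRing A] [Algebra ℚ A] [Module ℚ≥0 A] (c : A) :
    PowerSeries.constantCoeff (Ds c) = c := by
  rw [← PowerSeries.coeff_zero_eq_constantCoeff, coeff_Ds, gch_one_right']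

lemma constantCoeff_Wn (n : ℕ) : PowerSeries.constantCoeff (Wn n) ≠ 0 := by
  rw [Wn, map_prod]
  refine Finset.prod_ne_zero_iff.2 fun l hl => ?_
  rw [Finset.mem_Icc] at hl
  rw [constantCoeff_Ds]
  exact Nat.cast_ne_zero.mpr (by omega)

noncomputable def Fn (n : ℕ) : PowerSeries (Polynomial ℚ) :=
  (∏ l ∈ Finset.Icc 1 n, Ds (Polynomial.X - (n : Polynomial ℚ) + (l : Polynomial ℚ))) *
    PowerSeries.map (algebraMap ℚ (Polynomial ℚ)) (Wn n)⁻¹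

lemma ps_map_map {R S T : Type*} [Semiring R] [Semiring S] [Semiring T]
    (f : R →+* S) (g : S →+* T) (φ : PowerSeries R) :
    PowerSeries.map g (PowerSeries.map f φ) = PowerSeries.map (g.comp f) φ := by
  ext k; simp [PowerSeries.coeff_map]

lemma Fn_eval_zero (n j : ℕ) (hj : j < n) :
    PowerSeries.map ((Polynomial.aeval ((j:ℚ)) : Polynomial ℚ →ₐ[ℚ] ℚ) : Polynomial ℚ →+* ℚ)
      (Fn n) = 0 := by
  rw [Fn, map_mul, map_prod]
  have hmem : n - j ∈ Finset.Icc 1 n := by simp [Finset.mem_Icc]; omega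
  rw [Finset.prod_eq_zero hmem, zero_mul]
  rw [Ds_map]
  have : (Polynomial.aeval ((j:ℚ)) : Polynomial ℚ →ₐ[ℚ] ℚ)
      (Polynomial.X - (n : Polynomial ℚ) + ((n - j : ℕ) : Polynomial ℚ)) = 0 := by
    rw [map_add, map_sub, Polynomial.aeval_X, map_natCast, map_natCast,
      Nat.cast_sub hj.le]
    ring
  rw [this, Ds_zero']

noncomputable def cdiv (n : ℕ) : Polynomial ℚ :=
  ∏ l ∈ Finset.range n, (Polynomial.X - ((l : ℕ) : Polynomial ℚ))

lemma cdiv_monic (n : ℕ) : (cdiv n).Monic := by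
  refine Polynomial.monic_prod_of_monic _ _ fun i _ => ?_
  rw [← Polynomial.C_eq_natCast]
  exact Polynomial.monic_X_sub_C _

lemma cdiv_natDegree (n : ℕ) : (cdiv n).natDegree = n := by
  rw [cdiv, Polynomial.natDegree_prod]
  · rw [Finset.sum_congr rfl fun i _ => ?_, Finset.sum_const, smul_eq_mul, mul_one,
      Finset.card_range]
    rw [← Polynomial.C_eq_natCast]
    exact Polynomial.natDegree_X_sub_C _
  · intro i _
    rw [← Polynomial.C_eq_natCast]
    exact (Polynomial.monic_X_sub_C _).ne_zero

lemma cdiv_dvd (n k : ℕ) : cdiv n ∣ PowerSeries.coeff k (Fn n) := by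
  refine prod_X_sub_natCast_dvd _ _ fun j hj => ?_
  have := Fn_eval_zero n j (Finset.mem_range.1 hj)
  have h2 := congrArg (PowerSeries.coeff k) this
  rw [PowerSeries.coeff_map, map_zero] at h2
  rw [← Polynomial.coe_aeval_eq_eval]
  exact h2

noncomputable def Gn (n : ℕ) : PowerSeries (Polynomial ℚ) :=
  PowerSeries.mk fun k =>
    (n.factorial : ℚ) • (PowerSeries.coeff k (Fn n) /ₘ cdiv n)

lemma cdiv_mul_div (n k : ℕ) :
    cdiv n * (PowerSeries.coeff k (Fn n) /ₘ cdiv n) =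
      PowerSeries.coeff k (Fn n) := by
  have h := Polynomial.modByMonic_add_div (PowerSeries.coeff k (Fn n)) (cdiv n)
  rw [(Polynomial.modByMonic_eq_zero_iff_dvd (cdiv_monic n)).2 (cdiv_dvd n k), zero_add] at h
  exact h

lemma Fn_eq_gch_mul (n : ℕ) :
    Fn n = PowerSeries.C (gch (Polynomial.X : Polynomial ℚ) n) * Gn n := by
  refine PowerSeries.ext fun k => ?_
  rw [PowerSeries.coeff_C_mul, Gn, PowerSeries.coeff_mk]
  rw [gch, smul_mul_assoc, mul_smul_comm, smul_smul,
    inv_mul_cancel₀ (by exact_mod_cast Nat.factorial_ne_zero n), one_smul]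
  exact (cdiv_mul_div n k).symm

/-- coefficient-wise `natDegree` bound. -/
def pnd (a : ℕ) (f : PowerSeries (Polynomial ℚ)) : Prop :=
  ∀ k, (PowerSeries.coeff k f).natDegree ≤ a + k

lemma pnd_mul {a b : ℕ} {f g : PowerSeries (Polynomial ℚ)} (hf : pnd a f) (hg : pnd b g) :
    pnd (a + b) (f * g) := by
  intro k
  rw [PowerSeries.coeff_mul]
  refine Polynomial.natDegree_sum_le_of_forall_le _ _ fun p hp => ?_
  refine (Polynomial.natDegree_mul_le).trans ?_
  have := Finset.HasAntidiagonal.mem_antidiagonal.1 hp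
  have := hf p.1; have := hg p.2
  omega

lemma pnd_prod (s : Finset ℕ) (f : ℕ → PowerSeries (Polynomial ℚ))
    (h : ∀ i ∈ s, pnd 1 (f i)) : pnd s.card (∏ i ∈ s, f i) := by
  induction s using Finset.cons_induction with
  | empty => intro k; simp [PowerSeries.coeff_one]; split <;> simp
  | cons a s ha ih =>
    rw [Finset.prod_cons, Finset.card_cons]
    have := pnd_mul (h a (Finset.mem_cons_self a s)) (ih fun i hi => h i (Finset.mem_cons_of_mem hi))
    rwa [add_comm 1 s.card] at this

lemma pnd_Ds_poly (c : Polynomial ℚ) (hc : c.natDegree ≤ 1) : pnd 1 (Ds c) := by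
  intro k
  rw [coeff_Ds, gch]
  refine (Polynomial.natDegree_smul_le _ _).trans ?_
  refine (Polynomial.natDegree_prod_le _ _).trans ?_
  have : ∀ i ∈ Finset.range (k+1), (c - ((i:ℕ) : Polynomial ℚ)).natDegree ≤ 1 := by
    intro i _
    refine (Polynomial.natDegree_sub_le _ _).trans ?_
    simp [hc, Polynomial.natDegree_natCast]
  calc ∑ i ∈ Finset.range (k+1), (c - ((i:ℕ) : Polynomial ℚ)).natDegree
      ≤ ∑ _i ∈ Finset.range (k+1), 1 := Finset.sum_le_sum this
    _ = 1 + k := by simp [add_comm]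

lemma pnd_map0 (f : PowerSeries ℚ) : pnd 0 (PowerSeries.map (algebraMap ℚ (Polynomial ℚ)) f) := by
  intro k
  rw [PowerSeries.coeff_map, Polynomial.algebraMap_eq]
  simp

lemma Fn_pnd (n : ℕ) : pnd n (Fn n) := by
  have harg : ∀ l : ℕ, (Polynomial.X - (n : Polynomial ℚ) + (l : Polynomial ℚ)).natDegree ≤ 1 := by
    intro l
    have h2 : (Polynomial.X - (n : Polynomial ℚ)).natDegree ≤ 1 :=
      (Polynomial.natDegree_sub_le _ _).trans (by simp [Polynomial.natDegree_natCast])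
    refine (Polynomial.natDegree_add_le _ _).trans ?_
    simp [Polynomial.natDegree_natCast, h2]
  have h1 := pnd_prod (Finset.Icc 1 n)
    (fun l => Ds (Polynomial.X - (n : Polynomial ℚ) + (l : Polynomial ℚ)))
    (fun l _ => pnd_Ds_poly _ (harg l))
  rw [Nat.card_Icc, Nat.add_sub_cancel] at h1
  have := pnd_mul h1 (pnd_map0 ((Wn n)⁻¹))
  rwa [add_zero] at this

lemma Gn_natDegree (n k : ℕ) : (PowerSeries.coeff k (Gn n)).natDegree ≤ k := by
  rw [Gn, PowerSeries.coeff_mk]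
  refine (Polynomial.natDegree_smul_le _ _).trans ?_
  set q := PowerSeries.coeff k (Fn n) /ₘ cdiv n with hq
  by_cases h0 : q = 0
  · simp [h0]
  · have hf : PowerSeries.coeff k (Fn n) = cdiv n * q := (cdiv_mul_div n k).symm
    have hd := Fn_pnd n k
    rw [hf, Polynomial.natDegree_mul (cdiv_monic n).ne_zero h0, cdiv_natDegree] at hd
    omega

/-! ## weighted degree bounds on `MvPolynomial (Fin 3) ℚ` -/

abbrev R3 : Type := MvPolynomial (Fin 3) ℚ

def wle (w : Fin 3 → ℕ) (m : ℕ) (p : R3) : Prop :=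
  ∀ d ∈ p.support, (∑ i, w i * d i) ≤ m

lemma wle_mono {w m m'} {p : R3} (h : wle w m p) (hm : m ≤ m') : wle w m' p :=
  fun d hd => (h d hd).trans hm

lemma wle_zero (w m) : wle w m (0 : R3) := by intro d hd; simp at hd

lemma wle_C (w m) (a : ℚ) : wle w m (MvPolynomial.C a : R3) := by
  intro d hd
  rw [MvPolynomial.C_apply] at hd
  have := MvPolynomial.support_monomial_subset hd
  simp only [Finset.mem_singleton] at this
  simp [this]

lemma wle_one (w m) : wle w m (1 : R3) := by
  simpa using wle_C w m 1

lemma wle_natCast (w m) (j : ℕ) : wle w m ((j : ℕ) : R3) := by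
  rw [show ((j:ℕ) : R3) = MvPolynomial.C ((j:ℚ)) by simp]
  exact wle_C w m _

lemma wle_X (w : Fin 3 → ℕ) (i : Fin 3) : wle w (w i) (MvPolynomial.X i : R3) := by
  intro d hd
  rw [MvPolynomial.support_X] at hd
  simp at hd
  subst hd
  rw [Finset.sum_eq_single i (fun b _ hb => by simp [Finsupp.single_eq_of_ne' (Ne.symm hb)])
    (by simp)]
  simp

lemma wle_add {w m} {p q : R3} (hp : wle w m p) (hq : wle w m q) : wle w m (p + q) := by
  intro d hd
  rcases Finset.mem_union.1 (MvPolynomial.support_add hd) with h | h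
  exacts [hp d h, hq d h]

lemma wle_neg {w m} {p : R3} (hp : wle w m p) : wle w m (-p) := by
  intro d hd
  rw [MvPolynomial.support_neg] at hd
  exact hp d hd

lemma wle_sub {w m} {p q : R3} (hp : wle w m p) (hq : wle w m q) : wle w m (p - q) := by
  rw [sub_eq_add_neg]; exact wle_add hp (wle_neg hq)

lemma wle_smul {w m} (a : ℚ) {p : R3} (hp : wle w m p) : wle w m (a • p) :=
  fun d hd => hp d (MvPolynomial.support_smul hd)

lemma wle_mul {w a b} {p q : R3} (hp : wle w a p) (hq : wle w b q) : wle w (a + b) (p * q) := by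
  intro d hd
  have := MvPolynomial.support_mul p q hd
  rw [Finset.mem_add] at this
  obtain ⟨d1, h1, d2, h2, rfl⟩ := this
  have : (∑ i, w i * (d1 + d2) i) = (∑ i, w i * d1 i) + ∑ i, w i * d2 i := by
    rw [← Finset.sum_add_distrib]
    refine Finset.sum_congr rfl fun i _ => ?_
    simp [Finsupp.add_apply, mul_add]
  rw [this]
  exact add_le_add (hp d1 h1) (hq d2 h2)

lemma wle_sum {w m} {ι : Type*} (s : Finset ι) (f : ι → R3) (h : ∀ i ∈ s, wle w m (f i)) :
    wle w m (∑ i ∈ s, f i) := by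
  induction s using Finset.cons_induction with
  | empty => simpa using wle_zero w m
  | cons a s ha ih =>
    rw [Finset.sum_cons]
    exact wle_add (h a (Finset.mem_cons_self a s)) (ih fun i hi => h i (Finset.mem_cons_of_mem hi))

lemma wle_prod {w : Fin 3 → ℕ} {ι : Type*} (s : Finset ι) (f : ι → R3) (b : ι → ℕ)
    (h : ∀ i ∈ s, wle w (b i) (f i)) : wle w (∑ i ∈ s, b i) (∏ i ∈ s, f i) := by
  induction s using Finset.cons_induction with
  | empty => simpa using wle_one w 0
  | cons a s ha ih =>
    rw [Finset.prod_cons, Finset.sum_cons]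
    exact wle_mul (h a (Finset.mem_cons_self a s)) (ih fun i hi => h i (Finset.mem_cons_of_mem hi))

lemma wle_pow {w m} {p : R3} (hp : wle w m p) (i : ℕ) : wle w (i * m) (p ^ i) := by
  induction i with
  | zero => simpa using wle_one w 0
  | succ i ih =>
    rw [pow_succ, Nat.succ_mul]
    exact wle_mul ih hp

lemma wle_gch {w m} {c : R3} (hc : wle w m c) (k : ℕ) : wle w (k * m) (gch c k) := by
  rw [gch]
  refine wle_smul _ ?_
  have := wle_prod (Finset.range k) (fun i => c - ((i:ℕ) : R3)) (fun _ => m)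
    (fun i _ => wle_sub hc (wle_natCast w m i))
  simpa using this

/-! ## coefficient-wise weighted degree bounds for power series over `R3` -/

def cwle (w : Fin 3 → ℕ) (a : ℕ) (f : PowerSeries R3) : Prop :=
  ∀ k, wle w (a + k) (PowerSeries.coeff k f)

lemma cwle_mono {w : Fin 3 → ℕ} {a a' : ℕ} {f : PowerSeries R3} (h : cwle w a f)
    (ha : a ≤ a') : cwle w a' f :=
  fun k => wle_mono (h k) (by omega)

lemma cwle_mul {w : Fin 3 → ℕ} {a b : ℕ} {f g : PowerSeries R3}
    (hf : cwle w a f) (hg : cwle w b g) : cwle w (a + b) (f * g) := by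
  intro k
  rw [PowerSeries.coeff_mul]
  refine wle_sum _ _ fun p hp => ?_
  have hpk := Finset.HasAntidiagonal.mem_antidiagonal.1 hp
  refine wle_mono (wle_mul (hf p.1) (hg p.2)) ?_
  omega

lemma cwle_prod {w : Fin 3 → ℕ} (s : Finset ℕ) (f : ℕ → PowerSeries R3) (b : ℕ → ℕ)
    (h : ∀ i ∈ s, cwle w (b i) (f i)) : cwle w (∑ i ∈ s, b i) (∏ i ∈ s, f i) := by
  induction s using Finset.cons_induction with
  | empty =>
    intro k
    simp only [Finset.prod_empty, Finset.sum_empty]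
    rcases Nat.eq_zero_or_pos k with rfl | hk
    · simpa using wle_one w 0
    · rw [PowerSeries.coeff_one, if_neg (by omega)]
      exact wle_zero w _
  | cons a s ha ih =>
    rw [Finset.prod_cons, Finset.sum_cons]
    exact cwle_mul (h a (Finset.mem_cons_self a s)) (ih fun i hi => h i (Finset.mem_cons_of_mem hi))

lemma cwle_sub {w : Fin 3 → ℕ} {a : ℕ} {f g : PowerSeries R3}
    (hf : cwle w a f) (hg : cwle w a g) : cwle w a (f - g) := by
  intro k
  rw [map_sub]
  exact wle_sub (hf k) (hg k)

lemma cwle_Bs {w : Fin 3 → ℕ} {m : ℕ} {c : R3} (hm : m ≤ 1) (hc : wle w m c) :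
    cwle w 0 (Bs c) := by
  intro k
  rw [show Bs c = PowerSeries.mk fun k => gch c k from rfl, PowerSeries.coeff_mk]
  exact wle_mono (wle_gch hc k) (by nlinarith)

lemma cwle_Ds {w : Fin 3 → ℕ} {m : ℕ} {c : R3} (hm : m ≤ 1) (hc : wle w m c) :
    cwle w m (Ds c) := by
  intro k
  rw [coeff_Ds]
  exact wle_mono (wle_gch hc (k + 1)) (by nlinarith)

noncomputable def toR : Polynomial ℚ →ₐ[ℚ] R3 := Polynomial.aeval (MvPolynomial.X 0)

lemma wle_toR (w : Fin 3 → ℕ) (q : Polynomial ℚ) : wle w (q.natDegree * w 0) (toR q) := by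
  have hq : toR q = ∑ i ∈ Finset.range (q.natDegree + 1),
      MvPolynomial.C (q.coeff i) * (MvPolynomial.X 0) ^ i := by
    conv_lhs => rw [q.as_sum_range' (q.natDegree + 1) (Nat.lt_succ_self _)]
    rw [map_sum]
    refine Finset.sum_congr rfl fun i _ => ?_
    rw [toR, Polynomial.aeval_monomial, MvPolynomial.algebraMap_eq]
  rw [hq]
  refine wle_sum _ _ fun i hi => ?_
  have hile : i ≤ q.natDegree := by
    have := Finset.mem_range.1 hi; omega
  refine wle_mono (wle_mul (wle_C w 0 (q.coeff i)) (wle_pow (wle_X w 0) i)) ?_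
  rw [zero_add]
  exact Nat.mul_le_mul_right _ hile

lemma cwle_mapGn {w : Fin 3 → ℕ} (hw : w 0 ≤ 1) (n : ℕ) :
    cwle w 0 (PowerSeries.map (toR : Polynomial ℚ →+* R3) (Gn n)) := by
  intro k
  rw [PowerSeries.coeff_map]
  refine wle_mono (wle_toR w _) ?_
  calc (PowerSeries.coeff k (Gn n)).natDegree * w 0
      ≤ k * 1 := Nat.mul_le_mul (Gn_natDegree n k) hw
    _ = 0 + k := by omega

/-! ## the master series -/

noncomputable def cQ (n : ℕ) : R3 :=
  (MvPolynomial.X 0 + 1) * MvPolynomial.X 1 + ((n * (n + 1) / 2 : ℕ) : R3)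

noncomputable def Ms (l : ℕ) : PowerSeries R3 :=
  Ds (-MvPolynomial.X 1 - (l : R3)) - Ds (-MvPolynomial.X 2)

noncomputable def Phi (n : ℕ) : PowerSeries R3 :=
  Bs (cQ n) * (∏ l ∈ Finset.Icc 1 n, Ms l) *
    PowerSeries.map (toR : Polynomial ℚ →+* R3) (Gn n)

noncomputable def Tpoly (n k : ℕ) : R3 := PowerSeries.coeff k (Phi n)

lemma wle_Tpoly (w : Fin 3 → ℕ) (h0 : w 0 ≤ 1) (h1 : w 1 ≤ 1) (h2 : w 2 ≤ 1)
    (h01 : w 0 + w 1 ≤ 1) (n k : ℕ) :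
    wle w (n * max (w 1) (w 2) + k) (Tpoly n k) := by
  have hx0 : wle w (w 0) (MvPolynomial.X 0 : R3) := wle_X w 0
  have hx1 : wle w (w 1) (MvPolynomial.X 1 : R3) := wle_X w 1
  have hx2 : wle w (w 2) (MvPolynomial.X 2 : R3) := wle_X w 2
  have hcQ : wle w 1 (cQ n) := by
    refine wle_add (wle_mono (wle_mul (wle_add hx0 (wle_one w (w 0))) hx1) h01)
      (wle_natCast w 1 _)
  have hM : ∀ l : ℕ, cwle w (max (w 1) (w 2)) (Ms l) := by
    intro l
    refine cwle_sub (cwle_mono (cwle_Ds h1 ?_) (le_max_left _ _))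
      (cwle_mono (cwle_Ds h2 (wle_neg hx2)) (le_max_right _ _))
    exact wle_sub (wle_neg hx1) (wle_natCast w (w 1) l)
  have hprod : cwle w (n * max (w 1) (w 2)) (∏ l ∈ Finset.Icc 1 n, Ms l) := by
    have := cwle_prod (Finset.Icc 1 n) Ms (fun _ => max (w 1) (w 2)) (fun l _ => hM l)
    rwa [Finset.sum_const, Nat.card_Icc, Nat.add_sub_cancel, smul_eq_mul] at this
  have := cwle_mul (cwle_mul (cwle_Bs le_rfl hcQ) hprod) (cwle_mapGn h0 n)
  rw [zero_add, add_zero] at this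
  exact this k

lemma Tpoly_degreeOf (n k : ℕ) : MvPolynomial.degreeOf 0 (Tpoly n k) ≤ k := by
  have h := wle_Tpoly ![1, 0, 0] (by norm_num) (by norm_num) (by decide) (by norm_num) n k
  rw [MvPolynomial.degreeOf_le_iff]
  intro d hd
  have := h d hd
  simpa [Fin.sum_univ_three] using this

lemma Tpoly_yz (n k : ℕ) (d : Fin 3 →₀ ℕ) (hd : d ∈ (Tpoly n k).support) :
    d 1 + d 2 ≤ n + k := by
  have h := wle_Tpoly ![0, 1, 1] (by norm_num) (by norm_num) (by decide) (by norm_num) n k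
  have := h d hd
  simpa [Fin.sum_univ_three] using this

/-! ## `T 0 0 = 1` -/

lemma Wn_zero : Wn 0 = 1 := by
  rw [Wn, Finset.Icc_eq_empty (by omega), Finset.prod_empty]

lemma Fn_zero_coeff0 : PowerSeries.coeff 0 (Fn 0) = 1 := by
  rw [Fn, Finset.Icc_eq_empty (by omega), Finset.prod_empty, one_mul, PowerSeries.coeff_map,
    Wn_zero, PowerSeries.coeff_zero_eq_constantCoeff, PowerSeries.constantCoeff_inv,
    PowerSeries.constantCoeff_one, inv_one, map_one]

lemma cdiv_zero : cdiv 0 = 1 := by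
  rw [cdiv, Finset.range_zero, Finset.prod_empty]

lemma Tpoly_zero_zero : Tpoly 0 0 = 1 := by
  rw [Tpoly, PowerSeries.coeff_zero_eq_constantCoeff, Phi, map_mul, map_mul,
    Finset.Icc_eq_empty (by omega : ¬(1:ℕ) ≤ 0), Finset.prod_empty]
  have h1 : PowerSeries.constantCoeff (Bs (cQ 0)) = 1 := constantCoeff_Bs' _
  have h2 : PowerSeries.constantCoeff
      (PowerSeries.map (toR : Polynomial ℚ →+* R3) (Gn 0)) = 1 := by
    rw [← PowerSeries.coeff_zero_eq_constantCoeff, PowerSeries.coeff_map, Gn,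
      PowerSeries.coeff_mk, cdiv_zero, Polynomial.divByMonic_one, Fn_zero_coeff0]
    simp
  rw [h1, h2, map_one]
  ring

/-! ## evaluation lemmas -/

section Eval
variable (m₁ m₂ γ : ℤ)

noncomputable def evA : R3 →ₐ[ℚ] ℚ := MvPolynomial.aeval ![(m₁ : ℚ), (m₂ : ℚ), (γ : ℚ)]

noncomputable def evx : Polynomial ℚ →ₐ[ℚ] ℚ := Polynomial.aeval ((m₁ : ℚ))

lemma evA_comp_toR :
    ((evA m₁ m₂ γ : R3 →+* ℚ)).comp (toR : Polynomial ℚ →+* R3) = (evx m₁ : Polynomial ℚ →+* ℚ) := by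
  have : (evA m₁ m₂ γ).comp toR = evx m₁ := by
    refine Polynomial.algHom_ext ?_
    rw [AlgHom.comp_apply, toR, Polynomial.aeval_X, evA, MvPolynomial.aeval_X, evx,
      Polynomial.aeval_X]
    norm_num
  rw [← this]
  rfl

lemma map_evx_Fn (n : ℕ) :
    PowerSeries.map (evx m₁ : Polynomial ℚ →+* ℚ) (Fn n) =
      (∏ l ∈ Finset.Icc 1 n, Ds ((m₁ : ℚ) - n + l)) * (Wn n)⁻¹ := by
  rw [Fn, map_mul, map_prod]
  congr 1
  · refine Finset.prod_congr rfl fun l _ => ?_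
    rw [Ds_map]
    congr 1
    rw [map_add, map_sub, evx, Polynomial.aeval_X, map_natCast, map_natCast]
  · rw [ps_map_map]
    have : ((evx m₁ : Polynomial ℚ →+* ℚ)).comp (algebraMap ℚ (Polynomial ℚ)) = RingHom.id ℚ := by
      refine RingHom.ext fun q => ?_
      simp [evx]
    rw [this, PowerSeries.map_id, id_eq]

lemma map_evx_Fn' (n : ℕ) :
    PowerSeries.map (evx m₁ : Polynomial ℚ →+* ℚ) (Fn n) =
      PowerSeries.C (gch ((m₁ : ℚ)) n) * PowerSeries.map (evx m₁ : Polynomial ℚ →+* ℚ) (Gn n) := by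
  rw [Fn_eq_gch_mul n, map_mul, PowerSeries.map_C]
  congr 2
  rw [show ((evx m₁ : Polynomial ℚ →+* ℚ) : Polynomial ℚ → ℚ) = ((evx m₁ : Polynomial ℚ →ₐ[ℚ] ℚ) : Polynomial ℚ → ℚ) from rfl]
  rw [gch_map (evx m₁) (Polynomial.X) n, evx, Polynomial.aeval_X]

lemma map_evA_Phi (n : ℕ) :
    PowerSeries.map (evA m₁ m₂ γ : R3 →+* ℚ) (Phi n) =
      Bs (((m₁ : ℚ) + 1) * (m₂ : ℚ) + ((n * (n + 1) / 2 : ℕ) : ℚ)) *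
        (∏ l ∈ Finset.Icc 1 n, (Ds (-(m₂ : ℚ) - l) - Ds (-(γ : ℚ)))) *
        PowerSeries.map (evx m₁ : Polynomial ℚ →+* ℚ) (Gn n) := by
  rw [Phi, map_mul, map_mul, map_prod]
  congr 1
  · congr 1
    · rw [Bs_map]
      congr 1
      rw [cQ, map_add, map_mul, map_add, evA, MvPolynomial.aeval_X, MvPolynomial.aeval_X, map_one,
        map_natCast]
      norm_num
    · refine Finset.prod_congr rfl fun l _ => ?_
      rw [Ms, map_sub, Ds_map, Ds_map]
      congr 2
      · rw [map_sub, map_neg, evA, MvPolynomial.aeval_X, map_natCast]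
        norm_num
      · rw [map_neg, evA, MvPolynomial.aeval_X]
        rfl
  · rw [ps_map_map, evA_comp_toR]

end Eval

/-- **Claim (1) of Corollary [cor.expand].**
There is a family `T^{1,+}_{n,k} ∈ ℚ[x,y,z]` with `T^{1,+}_{0,0} = 1`,
`deg_x T^{1,+}_{n,k} ≤ k` and joint total degree in `(y,z)` at most `n + k`, such that
for all integers `m₁, m₂, γ` and every `n : ℕ`, in ℚ[[h]]:
`(1+h)^{(m₁+1)m₂+n(n+1)/2} ∏_{l=1}^{n} ((1+h)^{−m₂−l} − (1+h)^{−γ})((1+h)^{m₁−n+l} − 1)/((1+h)^l − 1)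
 = C(m₁,n) Σ_{k=0}^{∞} T^{1,+}_{n,k}(m₁,m₂,γ) h^{n+k}`,
where `C(m,n) = (∏_{l=0}^{n−1}(m−l))/n!`; in particular the left-hand side is
divisible by `h^n` in ℚ[[h]]. -/
theorem R_matrix_losing_crossing_expansion :
    ∃ T : ℕ → ℕ → MvPolynomial (Fin 3) ℚ,
      T 0 0 = 1 ∧
      (∀ n k, MvPolynomial.degreeOf 0 (T n k) ≤ k) ∧
      (∀ n k, ∀ d ∈ (T n k).support, d 1 + d 2 ≤ n + k) ∧
      ∀ (m₁ m₂ γ : ℤ) (n : ℕ),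
        (qhElt ^ ((m₁ + 1) * m₂ + ((n * (n + 1)) / 2 : ℕ)) *
            ∏ l ∈ Finset.Icc 1 n,
              ((qhElt ^ (-m₂ - (l : ℤ)) - qhElt ^ (-γ)) *
                  (qhElt ^ (m₁ - (n : ℤ) + l) - 1)) /
                (qhElt ^ (l : ℤ) - 1) =
          (((∏ l ∈ Finset.range n, ((m₁ : ℚ) - l)) / (n.factorial : ℚ) : ℚ) : QPSField) *
            qpsEmb (PowerSeries.X ^ n * PowerSeries.mk fun k =>
              MvPolynomial.eval ![(m₁ : ℚ), (m₂ : ℚ), (γ : ℚ)] (T n k))) ∧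
        ∃ g : PowerSeries ℚ,
          qhElt ^ ((m₁ + 1) * m₂ + ((n * (n + 1)) / 2 : ℕ)) *
              ∏ l ∈ Finset.Icc 1 n,
                ((qhElt ^ (-m₂ - (l : ℤ)) - qhElt ^ (-γ)) *
                    (qhElt ^ (m₁ - (n : ℤ) + l) - 1)) /
                  (qhElt ^ (l : ℤ) - 1) =
            qpsEmb (PowerSeries.X ^ n * g) := by
  classical
  refine ⟨Tpoly, Tpoly_zero_zero, Tpoly_degreeOf, fun n k d hd => Tpoly_yz n k d hd, ?_⟩
  intro m₁ m₂ γ n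
  have hpre : qhElt ^ ((m₁ + 1) * m₂ + ((n * (n + 1)) / 2 : ℕ) : ℤ)
      = qpsEmb (Bs (((m₁ : ℚ) + 1) * (m₂ : ℚ) + ((n * (n + 1) / 2 : ℕ) : ℚ))) := by
    rw [qh_zpow]
    congr 2
    generalize (n * (n + 1)) / 2 = t
    push_cast
    ring
  have hfact : ∀ l : ℕ,
      (qhElt ^ (-m₂ - (l : ℤ)) - qhElt ^ (-γ)) * (qhElt ^ (m₁ - (n : ℤ) + l) - 1)
        = qpsEmb ((PowerSeries.X * (Ds (-(m₂ : ℚ) - l) - Ds (-(γ : ℚ)))) *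
            (PowerSeries.X * Ds ((m₁ : ℚ) - n + l))) := by
    intro l
    rw [map_mul]
    congr 1
    · rw [qh_zpow, qh_zpow, ← map_sub]
      congr 1
      rw [show ((-m₂ - (l : ℤ) : ℤ) : ℚ) = -(m₂ : ℚ) - l by push_cast; ring,
        show ((-γ : ℤ) : ℚ) = -(γ : ℚ) by push_cast; ring, mul_sub, X_mul_Ds, X_mul_Ds]
      ring
    · rw [qh_zpow, show (1 : QPSField) = qpsEmb 1 from (map_one _).symm, ← map_sub]
      congr 1
      rw [show ((m₁ - (n : ℤ) + (l : ℤ) : ℤ) : ℚ) = (m₁ : ℚ) - n + l by push_cast; ring]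
      exact (X_mul_Ds _).symm
  have hden : ∀ l : ℕ, qhElt ^ ((l : ℕ) : ℤ) - 1 = qpsEmb (PowerSeries.X * Ds ((l : ℚ))) := by
    intro l
    rw [qh_zpow, show (1 : QPSField) = qpsEmb 1 from (map_one _).symm, ← map_sub]
    congr 1
    rw [show (((l : ℕ) : ℤ) : ℚ) = (l : ℚ) by push_cast; ring]
    exact (X_mul_Ds _).symm
  have hWn0 : Wn n ≠ 0 := fun h => constantCoeff_Wn n (by rw [h, map_zero])
  have hB0 : qpsEmb (PowerSeries.X ^ n * Wn n) ≠ 0 := by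
    rw [Ne, IsFractionRing.to_map_eq_zero_iff]
    exact mul_ne_zero (pow_ne_zero _ PowerSeries.X_ne_zero) hWn0
  have hXDen : (∏ l ∈ Finset.Icc 1 n, (PowerSeries.X * Ds ((l : ℚ)))) =
      PowerSeries.X ^ n * Wn n := by
    rw [Finset.prod_mul_distrib, Finset.prod_const, Nat.card_Icc, Nat.add_sub_cancel, Wn]
  have hWinv : Wn n * (Wn n)⁻¹ = 1 := PowerSeries.mul_inv_cancel _ (constantCoeff_Wn n)
  have hprod : (∏ l ∈ Finset.Icc 1 n,
        ((qhElt ^ (-m₂ - (l : ℤ)) - qhElt ^ (-γ)) * (qhElt ^ (m₁ - (n : ℤ) + l) - 1)) /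
          (qhElt ^ (l : ℤ) - 1))
      = qpsEmb (PowerSeries.X ^ n *
          ((∏ l ∈ Finset.Icc 1 n, (Ds (-(m₂ : ℚ) - l) - Ds (-(γ : ℚ)))) *
            ((∏ l ∈ Finset.Icc 1 n, Ds ((m₁ : ℚ) - n + l)) * (Wn n)⁻¹))) := by
    calc (∏ l ∈ Finset.Icc 1 n,
          ((qhElt ^ (-m₂ - (l : ℤ)) - qhElt ^ (-γ)) * (qhElt ^ (m₁ - (n : ℤ) + l) - 1)) /
            (qhElt ^ (l : ℤ) - 1))
        = ∏ l ∈ Finset.Icc 1 n,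
            (qpsEmb ((PowerSeries.X * (Ds (-(m₂ : ℚ) - l) - Ds (-(γ : ℚ)))) *
              (PowerSeries.X * Ds ((m₁ : ℚ) - n + l))) /
             qpsEmb (PowerSeries.X * Ds ((l : ℚ)))) :=
          Finset.prod_congr rfl fun l _ => by rw [hfact l, hden l]
      _ = qpsEmb (∏ l ∈ Finset.Icc 1 n,
            ((PowerSeries.X * (Ds (-(m₂ : ℚ) - l) - Ds (-(γ : ℚ)))) *
              (PowerSeries.X * Ds ((m₁ : ℚ) - n + l)))) /
          qpsEmb (∏ l ∈ Finset.Icc 1 n, (PowerSeries.X * Ds ((l : ℚ)))) := by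
          rw [Finset.prod_div_distrib, map_prod, map_prod]
      _ = qpsEmb (PowerSeries.X ^ n *
            ((∏ l ∈ Finset.Icc 1 n, (Ds (-(m₂ : ℚ) - l) - Ds (-(γ : ℚ)))) *
              ((∏ l ∈ Finset.Icc 1 n, Ds ((m₁ : ℚ) - n + l)) * (Wn n)⁻¹))) := by
          rw [hXDen, div_eq_iff hB0, ← map_mul]
          congr 1
          rw [Finset.prod_mul_distrib, Finset.prod_mul_distrib, Finset.prod_mul_distrib,
            Finset.prod_const, Nat.card_Icc, Nat.add_sub_cancel]
          linear_combination
            (-((PowerSeries.X ^ n * ∏ l ∈ Finset.Icc 1 n, (Ds (-(m₂ : ℚ) - l) - Ds (-(γ : ℚ)))) *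
              (PowerSeries.X ^ n * ∏ l ∈ Finset.Icc 1 n, Ds ((m₁ : ℚ) - n + l)))) * hWinv
  have hFn : (∏ l ∈ Finset.Icc 1 n, Ds ((m₁ : ℚ) - n + l)) * (Wn n)⁻¹
      = PowerSeries.C (gch ((m₁ : ℚ)) n) *
          PowerSeries.map (evx m₁ : Polynomial ℚ →+* ℚ) (Gn n) := by
    rw [← map_evx_Fn, map_evx_Fn']
  have hratC : ∀ q : ℚ, ((q : ℚ) : QPSField) = qpsEmb (PowerSeries.C q) := fun q => by
    rw [← eq_ratCast (qpsEmb.comp (PowerSeries.C (R := ℚ))) q, RingHom.comp_apply]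
  have hconst : ((∏ l ∈ Finset.range n, ((m₁ : ℚ) - l)) / (n.factorial : ℚ) : ℚ)
      = gch ((m₁ : ℚ)) n := by
    rw [gch, smul_eq_mul, div_eq_mul_inv, mul_comm]
  have hmk : (PowerSeries.mk fun k =>
        MvPolynomial.eval ![(m₁ : ℚ), (m₂ : ℚ), (γ : ℚ)] (Tpoly n k))
      = PowerSeries.map (evA m₁ m₂ γ : R3 →+* ℚ) (Phi n) := by
    refine PowerSeries.ext fun k => ?_
    rw [PowerSeries.coeff_mk, PowerSeries.coeff_map, Tpoly]
    show MvPolynomial.eval ![(m₁ : ℚ), (m₂ : ℚ), (γ : ℚ)] _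
        = MvPolynomial.aeval ![(m₁ : ℚ), (m₂ : ℚ), (γ : ℚ)] _
    rw [MvPolynomial.aeval_def, Algebra.algebraMap_self]
    rfl
  constructor
  · rw [hpre, hprod, hFn, ← map_mul, hconst, hratC, hmk, map_evA_Phi, ← map_mul]
    exact congrArg qpsEmb (by ring)
  · refine ⟨Bs (((m₁ : ℚ) + 1) * (m₂ : ℚ) + ((n * (n + 1) / 2 : ℕ) : ℚ)) *
      ((∏ l ∈ Finset.Icc 1 n, (Ds (-(m₂ : ℚ) - l) - Ds (-(γ : ℚ)))) *
        ((∏ l ∈ Finset.Icc 1 n, Ds ((m₁ : ℚ) - n + l)) * (Wn n)⁻¹)), ?_⟩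
    rw [hpre, hprod, ← map_mul]
    exact congrArg qpsEmb (by ring)
end

section
/- Key divisibility step in Lemma [lem.den]: Let R be a commutative integral domain, let L ≥ 2, and let l ≠ l′ be two indices in {1,…,L}. Let F₁, F₂, G₁, G₂ be formal power series in the variables X₁,…,X_L with coefficients in R, and let n ≥ 0 be an integer. Suppose that F₁ · (X_{l′} · G₂)^{2n+1} = F₂ · (X_l · G₁)^{2n+1} in the power series ring, and that the power series obtained from G₂ by setting X_l = 0 (i.e. by applying the substitution homomorphism that sends X_l to 0 and fixes the other variables) is nonzero. Then F₁ is divisible by X_l^{2n+1} in the ring of formal power series. -/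
/-- The result of setting the variable `X_l` equal to `0` in a multivariate formal power
series: the substitution homomorphism sending `X_l ↦ 0` and `X_i ↦ X_i` for `i ≠ l`
keeps exactly the coefficients of monomials not involving `X_l`. -/
noncomputable def MvPowerSeries.setVarZero {σ : Type*} {R : Type*} [CommSemiring R]
    (l : σ) (G : MvPowerSeries σ R) : MvPowerSeries σ R :=
  fun d => if d l = 0 then MvPowerSeries.coeff d G else 0

namespace MvPowerSeries

variable {σ R : Type*} [CommSemiring R]

lemma coeff_setVarZero (l : σ) (G : MvPowerSeries σ R) (d : σ →₀ ℕ) :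
    coeff d (setVarZero l G) = if d l = 0 then coeff d G else 0 := rfl

lemma setVarZero_mul (l : σ) (φ ψ : MvPowerSeries σ R) :
    setVarZero l (φ * ψ) = setVarZero l φ * setVarZero l ψ := by
  classical
  ext d
  rw [coeff_mul, coeff_setVarZero]
  by_cases h : d l = 0
  · rw [if_pos h, coeff_mul]
    refine Finset.sum_congr rfl fun p hp => ?_
    rw [Finset.HasAntidiagonal.mem_antidiagonal] at hp
    have h1 : p.1 l = 0 ∧ p.2 l = 0 := by
      have := congrArg (fun e : σ →₀ ℕ => e l) hp
      simp only [Finsupp.add_apply] at this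
      omega
    rw [coeff_setVarZero, coeff_setVarZero, if_pos h1.1, if_pos h1.2]
  · rw [if_neg h]
    refine (Finset.sum_eq_zero fun p hp => ?_).symm
    rw [Finset.HasAntidiagonal.mem_antidiagonal] at hp
    have h1 : ¬ p.1 l = 0 ∨ ¬ p.2 l = 0 := by
      have := congrArg (fun e : σ →₀ ℕ => e l) hp
      simp only [Finsupp.add_apply] at this
      omega
    rcases h1 with h1 | h1
    · rw [coeff_setVarZero, if_neg h1, zero_mul]
    · rw [coeff_setVarZero (G := ψ), if_neg h1, mul_zero]

lemma setVarZero_one (l : σ) : setVarZero l (1 : MvPowerSeries σ R) = 1 := by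
  classical
  ext d
  rw [coeff_setVarZero]
  by_cases h : d l = 0
  · rw [if_pos h]
  · rw [if_neg h]
    have hd : d ≠ 0 := fun h0 => h (by simp [h0])
    rw [coeff_one, if_neg (by simpa using hd)]

lemma X_dvd_iff_setVarZero (l : σ) (φ : MvPowerSeries σ R) :
    (X l : MvPowerSeries σ R) ∣ φ ↔ setVarZero l φ = 0 := by
  rw [X_dvd_iff, MvPowerSeries.ext_iff]
  constructor
  · intro h d
    rw [coeff_setVarZero]
    by_cases hd : d l = 0
    · rw [if_pos hd, h d hd, map_zero]
    · rw [if_neg hd, map_zero]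
  · intro h d hd
    have := h d
    rwa [coeff_setVarZero, if_pos hd, map_zero] at this

lemma setVarZero_X_self (l : σ) :
    setVarZero l (X l : MvPowerSeries σ R) = 0 := by
  rw [← X_dvd_iff_setVarZero]

lemma setVarZero_X_ne {l l' : σ} (h : l ≠ l') :
    setVarZero l (X l' : MvPowerSeries σ R) = X l' := by
  classical
  ext d
  rw [coeff_setVarZero]
  by_cases hd : d l = 0
  · rw [if_pos hd]
  · rw [if_neg hd, coeff_X]
    have : d ≠ Finsupp.single l' 1 := by
      intro h0
      exact hd (by rw [h0, Finsupp.single_apply, if_neg (fun e => h e.symm)])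
    rw [if_neg this]

lemma X_ne_zero' {σ R : Type*} [CommSemiring R] [Nontrivial R] (l : σ) :
    (X l : MvPowerSeries σ R) ≠ 0 := by
  classical
  intro h
  have := congrArg (coeff (Finsupp.single l 1)) h
  rw [coeff_X, if_pos rfl, map_zero] at this
  exact one_ne_zero this

lemma X_prime {σ R : Type*} [CommRing R] [IsDomain R] (l : σ) :
    Prime (X l : MvPowerSeries σ R) := by
  refine ⟨?_, ?_, ?_⟩
  · exact X_ne_zero' l
  · intro h
    have : (X l : MvPowerSeries σ R) ∣ 1 := h.dvd
    rw [X_dvd_iff_setVarZero, setVarZero_one] at this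
    exact one_ne_zero this
  · intro a b hab
    rw [X_dvd_iff_setVarZero, setVarZero_mul] at hab
    rcases mul_eq_zero.mp hab with h | h
    · exact Or.inl ((X_dvd_iff_setVarZero l a).mpr h)
    · exact Or.inr ((X_dvd_iff_setVarZero l b).mpr h)

end MvPowerSeries

/-- **Key divisibility step in Lemma [lem.den].**
Let `R` be a commutative integral domain, `L ≥ 2`, and `l ≠ l′` two indices in
`{1,…,L}`.  Let `F₁, F₂, G₁, G₂ ∈ R[[X₁,…,X_L]]` and `n ≥ 0`.  If
`F₁ · (X_{l′} G₂)^{2n+1} = F₂ · (X_l G₁)^{2n+1}` and the series obtained from `G₂` by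
setting `X_l = 0` is nonzero, then `F₁` is divisible by `X_l^{2n+1}`. -/
theorem divisibility_step {R : Type*} [CommRing R] [IsDomain R]
    {L : ℕ} (hL : 2 ≤ L) (l l' : Fin L) (hll' : l ≠ l')
    (F₁ F₂ G₁ G₂ : MvPowerSeries (Fin L) R) (n : ℕ)
    (heq : F₁ * (MvPowerSeries.X l' * G₂) ^ (2 * n + 1) =
      F₂ * (MvPowerSeries.X l * G₁) ^ (2 * n + 1))
    (hG₂ : MvPowerSeries.setVarZero l G₂ ≠ 0) :
    (MvPowerSeries.X l : MvPowerSeries (Fin L) R) ^ (2 * n + 1) ∣ F₁ := by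
  have : IsDomain (MvPowerSeries (Fin L) R) := NoZeroDivisors.to_isDomain _
  have hprime : Prime (MvPowerSeries.X l : MvPowerSeries (Fin L) R) :=
    MvPowerSeries.X_prime l
  have hdvd : (MvPowerSeries.X l : MvPowerSeries (Fin L) R) ^ (2 * n + 1) ∣
      F₁ * (MvPowerSeries.X l' * G₂) ^ (2 * n + 1) := by
    rw [heq, mul_pow]
    exact Dvd.dvd.mul_left (dvd_mul_right _ _) _
  refine hprime.pow_dvd_of_dvd_mul_right _ ?_ hdvd
  intro hX
  have hX' : (MvPowerSeries.X l : MvPowerSeries (Fin L) R) ∣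
      MvPowerSeries.X l' * G₂ := hprime.dvd_of_dvd_pow hX
  rw [MvPowerSeries.X_dvd_iff_setVarZero, MvPowerSeries.setVarZero_mul,
    MvPowerSeries.setVarZero_X_ne hll'] at hX'
  rcases mul_eq_zero.mp hX' with h | h
  · exact MvPowerSeries.X_ne_zero' l' h
  · exact hG₂ h
end
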